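/- arXiv:1912.06967 — 8 statements merged into one kernel-verified Lean document; each statement's English description precedes it below -/
import Mathlib

section
/- Let A be an n × n matrix over ℂ and let λ be an eigenvalue of A whose geometric multiplicity and algebraic multiplicity both equal 1. Let v ∈ ℂⁿ be an eigenvector of A for λ and let w ∈ ℂⁿ satisfy Aᵀw = λw and wᵀv = 1. Then adj(A − λI) = −P′(λ) · v wᵀ, where P(t) = det(A − tI) is the characteristic polynomial of A and adj denotes the classical adjugate matrix. -/
open Matrix

variable {K : Type*}

/-- The `k`-th compound matrix of an `m × n` matrix `A`: it is indexed by the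
`k`-element subsets of the row/column index sets (which correspond to `Fin (choose _ k)`
via the lexicographic order), and its `(S, T)` entry is the `k × k` minor of `A`
on rows `S` and columns `T`. -/
def compound [CommRing K] {m n : ℕ} (k : ℕ) (A : Matrix (Fin m) (Fin n) K) :
    Matrix {s : Finset (Fin m) // s.card = k} {t : Finset (Fin n) // t.card = k} K :=
  fun S T => (A.submatrix (S.1.orderEmbOfFin S.2) (T.1.orderEmbOfFin T.2)).det

/-- The `k`-th adjugate of an `n × n` matrix `A` (generalizing the classical adjugate,
which is the case `k = 1`): its `(S, T)` entry is `(-1) ^ (Σ S + Σ T)` times the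
`(n-k) × (n-k)` minor of `A` obtained by deleting the rows indexed by `T` and the
columns indexed by `S`.  (The sums `Σ S`, `Σ T` are taken with 1-based indexing in the
classical formula; with 0-based indexing the parity is unchanged.) -/
def adjCompound [CommRing K] {n : ℕ} (k : ℕ) (A : Matrix (Fin n) (Fin n) K) :
    Matrix {s : Finset (Fin n) // s.card = k} {t : Finset (Fin n) // t.card = k} K :=
  fun S T =>
    (-1 : K) ^ ((∑ i ∈ S.1, (i : ℕ)) + (∑ j ∈ T.1, (j : ℕ))) *
      (A.submatrix
        ((T.1ᶜ).orderEmbOfFin (show (T.1ᶜ).card = n - k by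
          simp [Finset.card_compl, T.2]))
        ((S.1ᶜ).orderEmbOfFin (show (S.1ᶜ).card = n - k by
          simp [Finset.card_compl, S.2]))).det

/-- The Plücker coordinates of `x₁ ∧ ⋯ ∧ x_k ∈ ℂ^(choose n k)`: the coordinate at the
`k`-element subset `S` is the `k × k` minor of the `n × k` matrix `[x₁ ⋯ x_k]` on rows `S`. -/
def wedgeVec [CommRing K] {n k : ℕ} (x : Fin k → Fin n → K) :
    {s : Finset (Fin n) // s.card = k} → K :=
  fun S => (Matrix.of fun (i j : Fin k) => x j (S.1.orderEmbOfFin S.2 i)).det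

/-- The characteristic polynomial `P(t) = det (A - t I)`. -/
noncomputable def detPoly [CommRing K] {n : ℕ} (A : Matrix (Fin n) (Fin n) K) : Polynomial K :=
  ((Matrix.of fun i j => Polynomial.C (A i j)) - (Polynomial.X : Polynomial K) • 1).det


private lemma mapDeriv_mul {n : ℕ} (M N : Matrix (Fin n) (Fin n) (Polynomial ℂ)) :
    (M * N).map (⇑Polynomial.derivative) =
      M.map (⇑Polynomial.derivative) * N + M * N.map (⇑Polynomial.derivative) := by
  ext i j
  simp only [Matrix.map_apply, Matrix.mul_apply, Matrix.add_apply,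
    Polynomial.derivative_sum, Polynomial.derivative_mul, Finset.sum_add_distrib]

/-- If `λ` is an eigenvalue of the complex `n × n` matrix `A` whose geometric and algebraic
multiplicities are both `1`, `v` is an eigenvector of `A` for `λ`, and `w` satisfies
`Aᵀ w = λ w` and `wᵀ v = 1`, then `adj (A - λI) = -P'(λ) • v wᵀ` where
`P(t) = det (A - tI)`. -/
theorem adjugate_eq_of_simple_eigenvalue
    {n : ℕ} (A : Matrix (Fin n) (Fin n) ℂ) (lam : ℂ)
    (hgeo : Module.finrank ℂ (LinearMap.ker (A - lam • 1).mulVecLin) = 1)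
    (halg : (detPoly A).rootMultiplicity lam = 1)
    (v w : Fin n → ℂ) (hv : v ≠ 0) (hAv : A *ᵥ v = lam • v)
    (hAw : Aᵀ *ᵥ w = lam • w) (hwv : w ⬝ᵥ v = 1) :
    Matrix.adjugate (A - lam • 1) =
      (-((Polynomial.derivative (detPoly A)).eval lam)) • Matrix.vecMulVec v w := by
  classical
  set B : Matrix (Fin n) (Fin n) ℂ := A - lam • 1 with hB
  have hBv : B *ᵥ v = 0 := by
    simp [hB, Matrix.sub_mulVec, Matrix.smul_mulVec, Matrix.one_mulVec, hAv]
  have hdet : B.det = 0 := by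
    rw [← Matrix.exists_mulVec_eq_zero_iff]
    exact ⟨v, hv, hBv⟩
  have hBw : w ᵥ* B = 0 := by
    have h1 : Bᵀ *ᵥ w = 0 := by
      simp [hB, Matrix.transpose_sub, Matrix.transpose_smul, Matrix.transpose_one,
        Matrix.sub_mulVec, Matrix.smul_mulVec, Matrix.one_mulVec, hAw]
    rw [← Matrix.mulVec_transpose, h1]
  -- the kernel of B is spanned by v
  have hker : LinearMap.ker B.mulVecLin = Submodule.span ℂ {v} := by
    have hle : Submodule.span ℂ {v} ≤ LinearMap.ker B.mulVecLin := by
      rw [Submodule.span_singleton_le_iff_mem, LinearMap.mem_ker, Matrix.mulVecLin_apply]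
      exact hBv
    exact (Submodule.eq_of_le_of_finrank_le hle (by
      rw [hgeo, finrank_span_singleton hv])).symm
  -- columns of the adjugate are multiples of v
  have hadj0 : B * B.adjugate = 0 := by
    rw [Matrix.mul_adjugate, hdet, zero_smul]
  have hcol : ∀ j, ∃ c : ℂ, (fun i => B.adjugate i j) = c • v := by
    intro j
    have hmem : (fun i => B.adjugate i j) ∈ Submodule.span ℂ {v} := by
      rw [← hker, LinearMap.mem_ker, Matrix.mulVecLin_apply]
      funext i
      have h2 := congrFun (congrFun hadj0 i) j
      simpa [Matrix.mul_apply, Matrix.mulVec, dotProduct] using h2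
    obtain ⟨c, hc⟩ := Submodule.mem_span_singleton.mp hmem
    exact ⟨c, hc.symm⟩
  choose c hc using hcol
  have hadjB : B.adjugate = Matrix.vecMulVec v c := by
    ext i j
    have := congrFun (hc j) i
    simp only [Pi.smul_apply, smul_eq_mul] at this
    rw [Matrix.vecMulVec_apply, this, mul_comm]
  -- polynomial identity
  set P : Polynomial ℂ := detPoly A with hP
  set M : Matrix (Fin n) (Fin n) (Polynomial ℂ) :=
    (Matrix.of fun i j => Polynomial.C (A i j)) - (Polynomial.X : Polynomial ℂ) • 1 with hM
  have hdetM : M.det = P := rfl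
  have key : M.map (⇑Polynomial.derivative) * M.adjugate
      + M * (M.adjugate.map (⇑Polynomial.derivative))
      = (Polynomial.derivative P) • 1 := by
    have h1 : (M * M.adjugate).map (⇑Polynomial.derivative) = (Polynomial.derivative P) • 1 := by
      rw [Matrix.mul_adjugate, hdetM]
      ext i j
      by_cases h : i = j <;>
        simp [Matrix.map_apply, Matrix.smul_apply, Matrix.one_apply, h]
    rw [← h1, mapDeriv_mul]
  -- evaluate at lam
  set f : Polynomial ℂ →+* ℂ := Polynomial.evalRingHom lam with hf
  have hMf : f.mapMatrix M = B := by
    ext i j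
    by_cases h : i = j <;>
      simp [hM, hB, Matrix.one_apply, h, hf, Matrix.map_apply]
  have hM'f : f.mapMatrix (M.map (⇑Polynomial.derivative)) = -1 := by
    ext i j
    by_cases h : i = j <;>
      simp [hM, Matrix.one_apply, h, hf, Matrix.map_apply]
  have hadjf : f.mapMatrix M.adjugate = B.adjugate := by
    rw [f.map_adjugate, hMf]
  set D : Matrix (Fin n) (Fin n) ℂ := f.mapMatrix (M.adjugate.map (⇑Polynomial.derivative))
    with hD
  have hsmul1 : f.mapMatrix ((Polynomial.derivative P) • (1 : Matrix (Fin n) (Fin n) (Polynomial ℂ)))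
      = ((Polynomial.derivative P).eval lam) • 1 := by
    ext i j
    by_cases h : i = j <;>
      simp [Matrix.one_apply, h, hf, Matrix.map_apply]
  have key2 : (-1 : Matrix (Fin n) (Fin n) ℂ) * B.adjugate + B * D
      = ((Polynomial.derivative P).eval lam) • 1 := by
    have h4 := congrArg (fun N => f.mapMatrix N) key
    simp only [map_add, _root_.map_mul, hMf, hM'f, hadjf, hsmul1] at h4
    exact h4
  -- multiply by w on the left
  have hw : -(w ᵥ* B.adjugate) = ((Polynomial.derivative P).eval lam) • w := by
    have hsm : ∀ r : ℂ, w ᵥ* (r • (1 : Matrix (Fin n) (Fin n) ℂ)) = r • w := by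
      intro r
      funext j
      simp [Matrix.vecMul, dotProduct, Matrix.smul_apply, Matrix.one_apply, mul_ite,
        Finset.sum_ite_eq', mul_comm]
    have h3 := congrArg (fun N => w ᵥ* N) key2
    simp only [Matrix.vecMul_add, ← Matrix.vecMul_vecMul, hBw, Matrix.zero_vecMul,
      add_zero, neg_one_mul, Matrix.vecMul_neg, hsm] at h3
    exact h3
  -- compute w ᵥ* adjugate B
  have hwadj : w ᵥ* B.adjugate = c := by
    rw [hadjB]
    funext j
    simp only [Matrix.vecMul, dotProduct, Matrix.vecMulVec_apply]
    calc ∑ i, w i * (v i * c j) = (∑ i, w i * v i) * c j := by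
          rw [Finset.sum_mul]
          exact Finset.sum_congr rfl fun i _ => (mul_assoc _ _ _).symm
      _ = c j := by rw [show (∑ i, w i * v i) = w ⬝ᵥ v from rfl, hwv, one_mul]
  have hc2 : c = (-((Polynomial.derivative P).eval lam)) • w := by
    rw [hwadj] at hw
    rw [neg_smul]
    exact neg_eq_iff_eq_neg.mp hw
  rw [hadjB, hc2]
  ext i j
  simp only [Matrix.vecMulVec_apply, Matrix.smul_apply, Pi.smul_apply, smul_eq_mul]
  ring
end

section
/- If A is an n × n Hermitian matrix with eigenvalues λ₁(A), …, λₙ(A) (listed with multiplicity) and i, j ∈ {1, …, n}, then the j-th component v_{i,j} of a unit eigenvector vᵢ associated to the eigenvalue λᵢ(A) satisfies |v_{i,j}|² · ∏_{k=1, k≠i}^{n} (λᵢ(A) − λ_k(A)) = ∏_{k=1}^{n−1} (λᵢ(A) − λ_k(M_j)), where λ₁(M_j), …, λ_{n−1}(M_j) are the eigenvalues of the (n−1) × (n−1) matrix M_j obtained from A by removing the j-th row and j-th column. -/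
/-!
Diagonalize `A = U D U*` with `D = diag d`. Then `adj (x - A) = U diag (∏_{k ≠ a} (x - d k)) U*`,
and its `(j, j)` entry is `det (x - M_j)`. Put `x = λ = μ i` and let `w = U* v` be the coordinates
of `v` in the eigenbasis. If `w b ≠ 0` then `d b = λ`, so the diagonal entry at `b` is
`∏_{k ≠ i} (λ - μ k)` (cancel `X - λ` in the characteristic polynomial) and all other diagonal
entries contain the factor `λ - d b = 0`. Together with `‖w‖ = 1` this makes the diagonal matrix
equal to `∏_{k ≠ i} (λ - μ k) • w w*`, i.e. `adj (λ - A) = ∏_{k ≠ i} (λ - μ k) • v v*`.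
-/

open Matrix

open Polynomial Finset

theorem Polynomial.prod_erase_sub_eq_eval_of_prod_X_sub_C_eq {R ι : Type*} [CommRing R]
    [IsDomain R] [DecidableEq ι] {s : Finset ι} {d : ι → R} {a : ι} (ha : a ∈ s) {x : R}
    {q : R[X]} (h : ∏ k ∈ s, (X - C (d k)) = (X - C x) * q) (hx : d a = x) :
    ∏ k ∈ s.erase a, (x - d k) = q.eval x := by
  have hq : ∏ k ∈ s.erase a, (X - C (d k)) = q := by
    refine mul_left_cancel₀ (X_sub_C_ne_zero x) ?_
    rw [← h, ← mul_prod_erase _ _ ha, hx]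
  simpa [eval_prod] using congrArg (eval x) hq

namespace Matrix

section CommRing

variable {R : Type*} [CommRing R]

theorem adjugate_apply_self_fin_succ {n : ℕ} (M : Matrix (Fin (n + 1)) (Fin (n + 1)) R)
    (j : Fin (n + 1)) : M.adjugate j j = (M.submatrix j.succAbove j.succAbove).det := by
  rw [adjugate_fin_succ_eq_det_submatrix, ← two_mul, (even_two_mul _).neg_one_pow, one_mul]

theorem eval_charpoly_submatrix_succAbove {n : ℕ} (A : Matrix (Fin (n + 1)) (Fin (n + 1)) R)
    (j : Fin (n + 1)) (x : R) :
    (A.submatrix j.succAbove j.succAbove).charpoly.eval x = (scalar _ x - A).adjugate j j := by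
  rw [adjugate_apply_self_fin_succ, eval_charpoly]
  congr 1
  ext a b
  simp [diagonal_apply]

variable {m : Type*} [Fintype m] [StarRing R]

theorem mul_vecMulVec_star_mul (U : Matrix m m R) (w : m → R) :
    U * vecMulVec w (star w) * star U = vecMulVec (U *ᵥ w) (star (U *ᵥ w)) := by
  rw [mul_vecMulVec, vecMulVec_mul, star_mulVec, star_eq_conjTranspose]

variable [DecidableEq m]

theorem adjugate_unitary_conj {U : Matrix m m R} (hU : U ∈ unitaryGroup m R) (D : Matrix m m R) :
    adjugate (U * D * star U) = U * adjugate D * star U := by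
  have hUU : star U * U = 1 := mem_unitaryGroup_iff'.mp hU
  have hUU' : U * star U = 1 := mem_unitaryGroup_iff.mp hU
  have adj_U : adjugate U = U.det • star U := by
    rw [← one_mul (adjugate U), ← hUU, mul_assoc, mul_adjugate, mul_smul_comm, mul_one]
  have adj_star_U : adjugate (star U) = (star U).det • U := by
    rw [← one_mul (adjugate (star U)), ← hUU', mul_assoc, mul_adjugate, mul_smul_comm, mul_one]
  rw [adjugate_mul_distrib, adjugate_mul_distrib, adj_U, adj_star_U]
  simp only [smul_mul_assoc, mul_smul_comm, smul_smul, ← det_mul, hUU', det_one, one_smul,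
    mul_assoc]

theorem diagonal_eq_smul_vecMulVec_star {e w : m → R} {c : R} (hw : star w ⬝ᵥ w = 1)
    (he : ∀ a b, w b ≠ 0 → e a = if a = b then c else 0) :
    diagonal e = c • vecMulVec w (star w) := by
  ext a b
  rw [smul_apply, vecMulVec_apply, smul_eq_mul, diagonal_apply]
  split_ifs with hab
  · subst hab
    have hterm : ∀ k, e a * (star (w k) * w k) = if a = k then c * (star (w k) * w k) else 0 := by
      intro k
      by_cases hk : w k = 0
      · simp [hk]
      · rw [he a k hk, ite_mul, zero_mul]
    calc e a = e a * (star w ⬝ᵥ w) := by rw [hw, mul_one]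
      _ = c * (w a * star (w a)) := by
        simp only [dotProduct, mul_sum, hterm, sum_ite_eq, mem_univ, if_true, Pi.star_apply]
        ring
  · by_cases ha : w a = 0
    · simp [ha]
    by_cases hb : w b = 0
    · simp [hb]
    have hc : c = 0 := by simpa [hab] using (he a a ha).symm.trans (he a b hb)
    simp [hc]

end CommRing

namespace IsHermitian

variable {𝕜 : Type*} [RCLike 𝕜] {m : Type*} [Fintype m] [DecidableEq m] {A : Matrix m m 𝕜}

theorem scalar_sub_eq (hA : A.IsHermitian) (x : 𝕜) :
    scalar m x - A = (hA.eigenvectorUnitary : Matrix m m 𝕜) *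
      diagonal (fun a => x - hA.eigenvalues a) * star (hA.eigenvectorUnitary : Matrix m m 𝕜) := by
  set U : Matrix m m 𝕜 := (hA.eigenvectorUnitary : Matrix m m 𝕜)
  have hUU : U * star U = 1 := mem_unitaryGroup_iff.mp hA.eigenvectorUnitary.2
  have hx : U * scalar m x * star U = scalar m x := by
    rw [← (scalar_commute x (Commute.all x) U).eq, mul_assoc, hUU, mul_one]
  conv_lhs => rw [hA.spectral_theorem, Unitary.conjStarAlgAut_apply, ← hx, scalar_apply]
  rw [← diagonal_sub, mul_sub, sub_mul]
  rfl

theorem adjugate_scalar_sub (hA : A.IsHermitian) (x : 𝕜) :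
    (scalar m x - A).adjugate = (hA.eigenvectorUnitary : Matrix m m 𝕜) *
      diagonal (fun a => ∏ k ∈ univ.erase a, (x - hA.eigenvalues k)) *
        star (hA.eigenvectorUnitary : Matrix m m 𝕜) := by
  rw [hA.scalar_sub_eq, adjugate_unitary_conj hA.eigenvectorUnitary.2, adjugate_diagonal]

theorem eigenvalues_eq_of_mulVec_eq_smul (hA : A.IsHermitian) {x : 𝕜} {v : m → 𝕜}
    (hv : A *ᵥ v = x • v) {b : m}
    (hb : (star (hA.eigenvectorUnitary : Matrix m m 𝕜) *ᵥ v) b ≠ 0) :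
    (hA.eigenvalues b : 𝕜) = x := by
  set U : Matrix m m 𝕜 := (hA.eigenvectorUnitary : Matrix m m 𝕜)
  have hUU : U * star U = 1 := mem_unitaryGroup_iff.mp hA.eigenvectorUnitary.2
  have hdiag : star U * A = diagonal (RCLike.ofReal ∘ hA.eigenvalues) * star U := by
    rw [← hA.conjStarAlgAut_star_eigenvectorUnitary, Unitary.conjStarAlgAut_star_apply, mul_assoc,
      mul_assoc, hUU, mul_one]
  have hcoord := congrFun (congrArg (star U *ᵥ ·) hv) b
  rw [mulVec_mulVec, hdiag, ← mulVec_mulVec, mulVec_smul, mulVec_diagonal, Pi.smul_apply,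
    smul_eq_mul, Function.comp_apply] at hcoord
  exact mul_right_cancel₀ hb hcoord

theorem adjugate_scalar_sub_eq_smul_vecMulVec (hA : A.IsHermitian) {x : 𝕜} {q : 𝕜[X]}
    (hq : A.charpoly = (X - C x) * q) {v : m → 𝕜} (hv : A *ᵥ v = x • v)
    (hunit : star v ⬝ᵥ v = 1) :
    (scalar m x - A).adjugate = q.eval x • vecMulVec v (star v) := by
  set U : Matrix m m 𝕜 := (hA.eigenvectorUnitary : Matrix m m 𝕜)
  have hUU : U * star U = 1 := mem_unitaryGroup_iff.mp hA.eigenvectorUnitary.2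
  obtain ⟨w, hw⟩ : ∃ w, star U *ᵥ v = w := ⟨_, rfl⟩
  have hv_eq : v = U *ᵥ w := by rw [← hw, mulVec_mulVec, hUU, one_mulVec]
  have hw_unit : star w ⬝ᵥ w = 1 := by
    rw [← hw, star_mulVec, ← dotProduct_mulVec, mulVec_mulVec, star_eq_conjTranspose,
      conjTranspose_conjTranspose, ← star_eq_conjTranspose, hUU, one_mulVec, hunit]
  have he : ∀ a b, w b ≠ 0 →
      ∏ k ∈ univ.erase a, (x - hA.eigenvalues k) = if a = b then q.eval x else 0 := by
    intro a b hb
    have hdb := hA.eigenvalues_eq_of_mulVec_eq_smul hv (hw ▸ hb)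
    split_ifs with hab
    · subst hab
      exact prod_erase_sub_eq_eval_of_prod_X_sub_C_eq (mem_univ a) (hA.charpoly_eq ▸ hq) hdb
    · exact prod_eq_zero (mem_erase.mpr ⟨Ne.symm hab, mem_univ b⟩) (by rw [hdb, sub_self])
  rw [hA.adjugate_scalar_sub, diagonal_eq_smul_vecMulVec_star hw_unit he, mul_smul_comm,
    smul_mul_assoc, mul_vecMulVec_star_mul, ← hv_eq]

end IsHermitian

end Matrix

/-- **Eigenvector-eigenvalue identity for Hermitian matrices.**  If `A` is an
`(n+1) × (n+1)` Hermitian matrix with eigenvalues `μ 1, …, μ (n+1)` listed with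
multiplicity (i.e. the characteristic polynomial of `A` is `∏ (X - μ l)`), `v` is a unit
eigenvector of `A` for the eigenvalue `μ i`, and `ν 1, …, ν n` are the eigenvalues of the
principal submatrix `M_j` obtained from `A` by deleting the `j`-th row and column, then
`|v j|² ∏_{l ≠ i} (μ i - μ l) = ∏ l (μ i - ν l)`. -/
theorem hermitian_eigenvector_eigenvalue_identity
    {n : ℕ} (A : Matrix (Fin (n + 1)) (Fin (n + 1)) ℂ) (hA : A.IsHermitian)
    (μ : Fin (n + 1) → ℝ)
    (hμ : A.charpoly = ∏ l, (Polynomial.X - Polynomial.C ((μ l : ℂ))))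
    (i j : Fin (n + 1))
    (ν : Fin n → ℝ)
    (hν : (A.submatrix j.succAbove j.succAbove).charpoly =
      ∏ l, (Polynomial.X - Polynomial.C ((ν l : ℂ))))
    (v : Fin (n + 1) → ℂ) (hunit : star v ⬝ᵥ v = 1)
    (hv : A *ᵥ v = (μ i : ℂ) • v) :
    ‖v j‖ ^ 2 * ∏ l ∈ Finset.univ.erase i, (μ i - μ l) =
      ∏ l, (μ i - ν l) := by
  have hq : A.charpoly = (X - C (μ i : ℂ)) * ∏ l ∈ univ.erase i, (X - C (μ l : ℂ)) := by
    rw [hμ, ← mul_prod_erase _ _ (mem_univ i)]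
  have hjj := congr_fun₂ (hA.adjugate_scalar_sub_eq_smul_vecMulVec hq hv hunit) j j
  rw [← eval_charpoly_submatrix_succAbove, hν] at hjj
  simp only [eval_prod, eval_sub, eval_X, eval_C] at hjj
  rw [Matrix.smul_apply, vecMulVec_apply, smul_eq_mul, Pi.star_apply, Complex.star_def,
    Complex.mul_conj, Complex.normSq_eq_norm_sq] at hjj
  exact_mod_cast (mul_comm _ _).trans hjj.symm
end

section
/- Let A, B be arbitrary n × n matrices over a field K (K = ℝ or ℂ). Then det(A + B) = Σ_{k=0}^{n} tr(adj_k(A) · C_k(B)). -/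
open Matrix

variable {K : Type*}

/-! Expanding `det (B + A)` multilinearly in the rows gives the sum, over all row sets `T`, of the
determinants of the matrices whose rows in `T` are those of `B` and whose other rows are those of
`A`. The Laplace expansion along the rows `T` writes such a determinant as
`∑ S, ± det B[T, S] * det A[Tᶜ, Sᶜ] = ∑ S, adj_k(A)[S, T] * C_k(B)[T, S]`, and summing over the
`T` with `#T = k` gives the trace of `adj_k(A) * C_k(B)`.

The Laplace expansion comes from the Leibniz formula: through the increasing enumerations of
`T, Tᶜ` and `S, Sᶜ`, a permutation mapping `T` onto `S` is a pair of permutations of `Fin k` and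
`Fin (n - k)`. The sign `(-1) ^ (∑ S + ∑ T)` of the permutation matching these enumerations is
found by counting inversions: the permutation moving `s` stably to the front inverts exactly the
pairs `i < j` with `i ∉ s`, `j ∈ s`, and there are `∑ s - (#s).choose 2` of them. -/

open Finset

namespace Finset

theorem sum_card_filter_lt_eq_choose_two {α : Type*} [LinearOrder α] (s : Finset α) :
    ∑ j ∈ s, #{i ∈ s | i < j} = (#s).choose 2 := by
  induction s using Finset.induction_on_max with
  | empty => simp
  | insert a s hlt ih =>
    have ha : a ∉ s := fun h => lt_irrefl a (hlt a h)
    rw [sum_insert ha, card_insert_of_notMem ha, Nat.choose_succ_succ', Nat.choose_one_right,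
      filter_insert, if_neg (lt_irrefl a), filter_true_of_mem hlt, ← ih]
    congr 1
    refine sum_congr rfl fun j hj => ?_
    rw [filter_insert, if_neg (lt_asymm (hlt j hj))]

theorem sum_card_compl_filter_lt_add_choose_two {n : ℕ} (s : Finset (Fin n)) :
    ∑ j ∈ s, #{i ∈ sᶜ | i < j} + (#s).choose 2 = ∑ j ∈ s, (j : ℕ) := by
  rw [← s.sum_card_filter_lt_eq_choose_two, ← sum_add_distrib]
  refine sum_congr rfl fun j _ => ?_
  rw [← Fin.card_Iio j, ← card_filter_add_card_filter_not (s := Iio j) (· ∈ s), add_comm]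
  congr 2 <;> ext i <;> simp [and_comm]

theorem sum_finset_eq_sum_range_sum_card_eq {α M : Type*} [Fintype α] [DecidableEq α]
    [AddCommMonoid M] (f : Finset α → M) :
    ∑ s, f s = ∑ k ∈ range (Fintype.card α + 1), ∑ s : {s : Finset α // #s = k}, f s := by
  rw [← sum_fiberwise_of_maps_to (g := card)
    fun s _ => mem_range.2 (Nat.lt_succ_of_le (card_le_univ s))]
  exact sum_congr rfl fun k _ => sum_subtype _ (by simp) f

section StablePartition

variable {n k l : ℕ} {s : Finset (Fin n)}

lemma card_add_card_compl_eq (hs : #s = k) (hsc : #sᶜ = l) : k + l = n := by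
  rw [← hs, ← hsc, card_add_card_compl, Fintype.card_fin]

def stablePartitionPerm (hs : #s = k) (hsc : #sᶜ = l) : Equiv.Perm (Fin n) :=
  (finSumEquivOfFinset hs hsc).symm.trans
    (finSumFinEquiv.trans (finCongr (card_add_card_compl_eq hs hsc)))

@[simp]
lemma stablePartitionPerm_orderEmbOfFin (hs : #s = k) (hsc : #sᶜ = l) (a : Fin k) :
    (stablePartitionPerm hs hsc (s.orderEmbOfFin hs a) : ℕ) = a := by
  rw [← finSumEquivOfFinset_inl hs hsc]
  simp only [stablePartitionPerm, Equiv.trans_apply, Equiv.symm_apply_apply]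
  simp

@[simp]
lemma stablePartitionPerm_orderEmbOfFin_compl (hs : #s = k) (hsc : #sᶜ = l) (b : Fin l) :
    (stablePartitionPerm hs hsc (sᶜ.orderEmbOfFin hsc b) : ℕ) = k + b := by
  rw [← finSumEquivOfFinset_inr hs hsc]
  simp only [stablePartitionPerm, Equiv.trans_apply, Equiv.symm_apply_apply]
  simp

lemma stablePartitionPerm_lt_iff (hs : #s = k) (hsc : #sᶜ = l) {i j : Fin n} (hij : i < j) :
    stablePartitionPerm hs hsc j < stablePartitionPerm hs hsc i ↔ j ∈ s ∧ i ∉ s := by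
  obtain ⟨x, rfl⟩ := (finSumEquivOfFinset hs hsc).surjective i
  obtain ⟨y, rfl⟩ := (finSumEquivOfFinset hs hsc).surjective j
  have hs_mem := orderEmbOfFin_mem s hs
  have hsc_mem (b : Fin l) : sᶜ.orderEmbOfFin hsc b ∉ s := mem_compl.1 (orderEmbOfFin_mem _ hsc b)
  rcases x with a | a <;> rcases y with b | b <;>
    simp only [finSumEquivOfFinset_inl, finSumEquivOfFinset_inr, OrderEmbedding.lt_iff_lt,
      Fin.lt_def, stablePartitionPerm_orderEmbOfFin, stablePartitionPerm_orderEmbOfFin_compl,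
      hs_mem, hsc_mem, not_true, not_false_eq_true, and_true, and_false, iff_true,
      iff_false, not_lt] at hij ⊢ <;> omega

lemma sign_stablePartitionPerm (hs : #s = k) (hsc : #sᶜ = l) :
    Equiv.Perm.sign (stablePartitionPerm hs hsc) = (-1) ^ ∑ j ∈ s, #{i ∈ sᶜ | i < j} := by
  set σ := stablePartitionPerm hs hsc
  have hlt {i j : Fin n} (hij : i < j) : σ i < σ j ↔ j ∉ s ∨ i ∈ s := by
    rw [← not_iff_not, not_lt, (σ.injective.ne hij.ne').le_iff_lt,
      stablePartitionPerm_lt_iff hs hsc hij]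
    tauto
  rw [Equiv.Perm.sign_eq_prod_prod_Iio, ← prod_pow_eq_pow_sum, ← Fintype.prod_ite_mem s]
  refine Fintype.prod_congr _ _ fun j => ?_
  rw [prod_congr rfl fun i hi => if_congr (hlt (mem_Iio.1 hi)) rfl rfl]
  by_cases hj : j ∈ s
  · simp only [hj, not_true_eq_false, false_or, if_true, prod_ite, prod_const_one, one_mul,
      prod_const]
    congr 2
    ext i
    simp [and_comm]
  · simp [hj]

lemma sign_finSumEquivOfFinset_symm_trans {t : Finset (Fin n)} (hs : #s = k) (hsc : #sᶜ = l)
    (ht : #t = k) (htc : #tᶜ = l) :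
    Equiv.Perm.sign ((finSumEquivOfFinset ht htc).symm.trans (finSumEquivOfFinset hs hsc)) =
      (-1) ^ (∑ i ∈ s, (i : ℕ) + ∑ j ∈ t, (j : ℕ)) := by
  have hperm : (finSumEquivOfFinset ht htc).symm.trans (finSumEquivOfFinset hs hsc) =
      (stablePartitionPerm ht htc).trans (stablePartitionPerm hs hsc).symm := by
    ext x
    simp [stablePartitionPerm]
  rw [hperm, Equiv.Perm.sign_trans, Equiv.Perm.sign_symm, sign_stablePartitionPerm,
    sign_stablePartitionPerm, ← sum_card_compl_filter_lt_add_choose_two s,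
    ← sum_card_compl_filter_lt_add_choose_two t, hs, ht,
    show ∀ a b c : ℕ, a + c + (b + c) = a + b + 2 * c by intros; ring, pow_add, pow_add, pow_mul]
  simp

end StablePartition

section BlockPerm

variable {ι : Type*} [Fintype ι] [LinearOrder ι] {k l : ℕ} {T : Finset ι}

lemma card_compl_of_card_eq {s : Finset ι} (hs : #s = k) (hT : #T = k) (hTc : #Tᶜ = l) :
    #sᶜ = l := by
  rw [card_compl, hs, ← hT, ← card_compl, hTc]

def blockPerm (hT : #T = k) (hTc : #Tᶜ = l)
    (x : {s : Finset ι // #s = k} × Equiv.Perm (Fin k) × Equiv.Perm (Fin l)) : Equiv.Perm ι :=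
  (finSumEquivOfFinset hT hTc).symm.trans ((Equiv.sumCongr x.2.1 x.2.2).trans
    (finSumEquivOfFinset x.1.2 (card_compl_of_card_eq x.1.2 hT hTc)))

@[simp]
lemma blockPerm_orderEmbOfFin (hT : #T = k) (hTc : #Tᶜ = l) (S : {s : Finset ι // #s = k})
    (α : Equiv.Perm (Fin k)) (β : Equiv.Perm (Fin l)) (a : Fin k) :
    blockPerm hT hTc (S, α, β) (T.orderEmbOfFin hT a) = S.1.orderEmbOfFin S.2 (α a) := by
  rw [← finSumEquivOfFinset_inl hT hTc]
  simp only [blockPerm, Equiv.trans_apply, Equiv.symm_apply_apply]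
  simp

@[simp]
lemma blockPerm_orderEmbOfFin_compl (hT : #T = k) (hTc : #Tᶜ = l) (S : {s : Finset ι // #s = k})
    (α : Equiv.Perm (Fin k)) (β : Equiv.Perm (Fin l)) (b : Fin l) :
    blockPerm hT hTc (S, α, β) (Tᶜ.orderEmbOfFin hTc b) =
      S.1ᶜ.orderEmbOfFin (card_compl_of_card_eq S.2 hT hTc) (β b) := by
  rw [← finSumEquivOfFinset_inr hT hTc]
  simp only [blockPerm, Equiv.trans_apply, Equiv.symm_apply_apply]
  simp

lemma sign_blockPerm (hT : #T = k) (hTc : #Tᶜ = l)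
    (x : {s : Finset ι // #s = k} × Equiv.Perm (Fin k) × Equiv.Perm (Fin l)) :
    Equiv.Perm.sign (blockPerm hT hTc x) =
      Equiv.Perm.sign ((finSumEquivOfFinset hT hTc).symm.trans
        (finSumEquivOfFinset x.1.2 (card_compl_of_card_eq x.1.2 hT hTc))) *
      (Equiv.Perm.sign x.2.1 * Equiv.Perm.sign x.2.2) := by
  set e := finSumEquivOfFinset hT hTc
  have hfactor : blockPerm hT hTc x =
      ((e.symm.trans (Equiv.sumCongr x.2.1 x.2.2)).trans e).trans
        (e.symm.trans (finSumEquivOfFinset x.1.2 (card_compl_of_card_eq x.1.2 hT hTc))) := by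
    ext y
    simp [blockPerm, e]
  rw [hfactor, Equiv.Perm.sign_trans, Equiv.Perm.sign_symm_trans_trans,
    Equiv.Perm.sign_sumCongr]

lemma blockPerm_injective (hT : #T = k) (hTc : #Tᶜ = l) :
    Function.Injective (blockPerm hT hTc) := by
  rintro ⟨⟨S, hS⟩, α, β⟩ ⟨⟨S', hS'⟩, α', β'⟩ h
  have hinl (a : Fin k) : S.orderEmbOfFin hS (α a) = S'.orderEmbOfFin hS' (α' a) := by
    simpa using DFunLike.congr_fun h (T.orderEmbOfFin hT a)
  have hinr (b : Fin l) : Sᶜ.orderEmbOfFin (card_compl_of_card_eq hS hT hTc) (β b) =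
      S'ᶜ.orderEmbOfFin (card_compl_of_card_eq hS' hT hTc) (β' b) := by
    simpa using DFunLike.congr_fun h (Tᶜ.orderEmbOfFin hTc b)
  obtain rfl : S = S' := by
    refine eq_of_subset_of_card_le (fun y hy => ?_) (by rw [hS, hS'])
    obtain ⟨a, rfl⟩ : y ∈ Set.range (S.orderEmbOfFin hS) := by rwa [range_orderEmbOfFin]
    have := hinl (α.symm a)
    rw [Equiv.apply_symm_apply] at this
    exact this ▸ orderEmbOfFin_mem S' hS' _
  have hα : α = α' := Equiv.ext fun a => (S.orderEmbOfFin hS).injective (hinl a)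
  have hβ : β = β' := Equiv.ext fun b => (Sᶜ.orderEmbOfFin _).injective (hinr b)
  rw [hα, hβ]

lemma blockPerm_bijective (hT : #T = k) (hTc : #Tᶜ = l) :
    Function.Bijective (blockPerm hT hTc) := by
  refine (Fintype.bijective_iff_injective_and_card _).2 ⟨blockPerm_injective hT hTc, ?_⟩
  have hkl : Fintype.card ι - k = l := by rw [← hT, ← card_compl, hTc]
  simp only [Fintype.card_prod, Fintype.card_perm, Fintype.card_fin, Fintype.card_finset_len]
  rw [← hkl, ← mul_assoc, Nat.choose_mul_factorial_mul_factorial (hT ▸ card_le_univ T)]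

end BlockPerm

end Finset

namespace Matrix

variable {R : Type*} [CommRing R]

theorem det_eq_sum_sign_mul_det_submatrix_mul_det_submatrix {ι : Type*} [Fintype ι]
    [LinearOrder ι] {k l : ℕ} {T : Finset ι} (M : Matrix ι ι R) (hT : #T = k) (hTc : #Tᶜ = l) :
    M.det = ∑ S : {s : Finset ι // #s = k},
      (Equiv.Perm.sign ((finSumEquivOfFinset hT hTc).symm.trans
        (finSumEquivOfFinset S.2 (card_compl_of_card_eq S.2 hT hTc))) : R) *
      (M.submatrix (T.orderEmbOfFin hT) (S.1.orderEmbOfFin S.2)).det *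
      (M.submatrix (Tᶜ.orderEmbOfFin hTc)
        (S.1ᶜ.orderEmbOfFin (card_compl_of_card_eq S.2 hT hTc))).det := by
  rw [← M.det_transpose, det_apply', ← (blockPerm_bijective hT hTc).sum_comp,
    Fintype.sum_prod_type]
  refine sum_congr rfl fun S _ => ?_
  rw [← det_transpose, det_apply', ← det_transpose, det_apply', mul_assoc, sum_mul_sum, mul_sum,
    Fintype.sum_prod_type]
  refine sum_congr rfl fun α _ => ?_
  rw [mul_sum]
  refine sum_congr rfl fun β _ => ?_
  rw [sign_blockPerm, ← (finSumEquivOfFinset hT hTc).prod_comp, Fintype.prod_sum_type]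
  simp only [finSumEquivOfFinset_inl, finSumEquivOfFinset_inr, transpose_apply,
    blockPerm_orderEmbOfFin, blockPerm_orderEmbOfFin_compl, submatrix_apply]
  push_cast
  ring

theorem det_ite_mem_eq_sum_adjCompound_mul_compound {n k : ℕ} (A B : Matrix (Fin n) (Fin n) R)
    (T : {s : Finset (Fin n) // #s = k}) :
    det (of fun i => if i ∈ T.1 then B i else A i) =
      ∑ S, adjCompound k A S T * compound k B T S := by
  have hTc : #T.1ᶜ = n - k := by simp [card_compl, T.2]
  have hmem (a : Fin k) : T.1.orderEmbOfFin T.2 a ∈ T.1 := orderEmbOfFin_mem _ _ a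
  have hnmem (b : Fin (n - k)) : T.1ᶜ.orderEmbOfFin hTc b ∉ T.1 :=
    mem_compl.1 (orderEmbOfFin_mem _ _ b)
  rw [det_eq_sum_sign_mul_det_submatrix_mul_det_submatrix _ T.2 hTc]
  refine sum_congr rfl fun S _ => ?_
  simp only [submatrix, of_apply, hmem, hnmem, if_true, if_false,
    sign_finSumEquivOfFinset_symm_trans, adjCompound, compound]
  push_cast
  ring

end Matrix

/-- For arbitrary `n × n` matrices `A, B` over `K` (`K = ℝ` or `ℂ`),
`det (A + B) = ∑_{k=0}^{n} tr (adj_k A ⬝ C_k B)`. -/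
theorem det_add_eq_sum_trace_adjCompound_mul_compound
    {K : Type*} [RCLike K] {n : ℕ} (A B : Matrix (Fin n) (Fin n) K) :
    (A + B).det =
      ∑ k ∈ Finset.range (n + 1), Matrix.trace (adjCompound k A * compound k B) := by
  have hrows : (B + A).det = ∑ T : Finset (Fin n), det (of fun i => if i ∈ T then B i else A i) :=
    detRowAlternating.toMultilinearMap.map_add_univ B A
  rw [add_comm, hrows, sum_finset_eq_sum_range_sum_card_eq, Fintype.card_fin]
  refine sum_congr rfl fun k _ => ?_
  simp only [trace, Matrix.diag, mul_apply, det_ite_mem_eq_sum_adjCompound_mul_compound]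
  exact sum_comm
end

section
/- Let A be an n × n matrix over a field K (K = ℝ or ℂ) with rank A = n − k for some 1 ≤ k ≤ n − 1. Then for every integer j ∈ {1, …, n − 1} with j ≥ k, the rank of adj_j(A) equals the binomial coefficient C(n−k, n−j). In particular, rank adj_k(A) = 1. -/
open Matrix

variable {K : Type*}

section Aux

open Finset BigOperators

lemma image_univ_orderEmbOfFin {N m : ℕ} (s : Finset (Fin N)) (hs : s.card = m) :
    Finset.univ.image (s.orderEmbOfFin hs) = s := by
  apply Finset.coe_injective
  rw [Finset.coe_image, Finset.coe_univ, Set.image_univ, Finset.range_orderEmbOfFin]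

lemma sum_injective_eq [CommRing K] {m N : ℕ} (F : (Fin m → Fin N) → K) :
    ∑ g ∈ Finset.univ.filter (fun g : Fin m → Fin N => Function.Injective g), F g
      = ∑ p : {s : Finset (Fin N) // s.card = m} × Equiv.Perm (Fin m),
          F (fun i => p.1.1.orderEmbOfFin p.1.2 (p.2 i)) := by
  classical
  refine (Finset.sum_bij
    (fun (p : {s : Finset (Fin N) // s.card = m} × Equiv.Perm (Fin m)) _ =>
      (fun i => p.1.1.orderEmbOfFin p.1.2 (p.2 i) : Fin m → Fin N))
    ?_ ?_ ?_ ?_).symm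
  · intro p _
    simp only [Finset.mem_filter, Finset.mem_univ, true_and]
    exact fun a b hab => p.2.injective ((p.1.1.orderEmbOfFin p.1.2).injective hab)
  · rintro ⟨⟨s₁, hs₁⟩, σ₁⟩ _ ⟨⟨s₂, hs₂⟩, σ₂⟩ _ h
    simp only at h
    have him : ∀ (s : Finset (Fin N)) (hs : s.card = m) (σ : Equiv.Perm (Fin m)),
        Finset.univ.image (fun i => s.orderEmbOfFin hs (σ i)) = s := by
      intro s hs σ
      have : (fun i => s.orderEmbOfFin hs (σ i)) = (s.orderEmbOfFin hs) ∘ σ := rfl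
      rw [this, ← Finset.image_image, Finset.image_univ_equiv, image_univ_orderEmbOfFin]
    have hset : s₁ = s₂ := by
      rw [← him s₁ hs₁ σ₁, ← him s₂ hs₂ σ₂, h]
    subst hset
    have hσ : σ₁ = σ₂ := Equiv.ext fun i => (s₁.orderEmbOfFin hs₁).injective (congrFun h i)
    simp [hσ]
  · rintro g hg
    simp only [Finset.mem_filter, Finset.mem_univ, true_and] at hg
    have hScard : (Finset.univ.image g).card = m := by
      rw [Finset.card_image_of_injective _ hg, Finset.card_univ, Fintype.card_fin]
    set S : {s : Finset (Fin N) // s.card = m} := ⟨Finset.univ.image g, hScard⟩ with hSdef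
    have hmem : ∀ i, g i ∈ S.1 := fun i => Finset.mem_image_of_mem g (Finset.mem_univ i)
    set τ : Fin m → Fin m := fun i => (S.1.orderIsoOfFin S.2).symm ⟨g i, hmem i⟩ with hτ
    have hτinj : Function.Injective τ := by
      intro a b hab
      apply hg
      have : ((S.1.orderIsoOfFin S.2) (τ a) : Fin N)
          = ((S.1.orderIsoOfFin S.2) (τ b) : Fin N) := by rw [hab]
      simpa [hτ] using this
    have hτbij := Finite.injective_iff_bijective.mp hτinj
    refine ⟨⟨S, Equiv.ofBijective τ hτbij⟩, Finset.mem_univ _, funext fun i => ?_⟩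
    show S.1.orderEmbOfFin S.2 (τ i) = g i
    have h2 : S.1.orderEmbOfFin S.2 (τ i) = ((S.1.orderIsoOfFin S.2) (τ i) : Fin N) := rfl
    rw [h2, hτ]
    simp
  · intro p _; rfl

lemma key_perm_sum [CommRing K] {m N : ℕ} (A : Matrix (Fin m) (Fin N) K)
    (B : Matrix (Fin N) (Fin m) K) (S : {s : Finset (Fin N) // s.card = m}) :
    ∑ σ : Equiv.Perm (Fin m),
        (∏ i, A i (S.1.orderEmbOfFin S.2 (σ i)))
          * (B.submatrix (fun i => S.1.orderEmbOfFin S.2 (σ i)) id).det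
      = (A.submatrix id (S.1.orderEmbOfFin S.2)).det
          * (B.submatrix (S.1.orderEmbOfFin S.2) id).det := by
  classical
  set e := S.1.orderEmbOfFin S.2 with he
  have hsub : ∀ σ : Equiv.Perm (Fin m),
      (B.submatrix (fun i => e (σ i)) id) = (B.submatrix e id).submatrix σ id := by
    intro σ; ext i j; rfl
  calc ∑ σ : Equiv.Perm (Fin m), (∏ i, A i (e (σ i))) * (B.submatrix (fun i => e (σ i)) id).det
      = ∑ σ : Equiv.Perm (Fin m), ((Equiv.Perm.sign σ : K) * ∏ i, A i (e (σ i)))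
          * (B.submatrix e id).det := by
        refine Finset.sum_congr rfl fun σ _ => ?_
        rw [hsub σ, Matrix.det_permute]
        ring
    _ = (∑ σ : Equiv.Perm (Fin m), (Equiv.Perm.sign σ : K) * ∏ i, A i (e (σ i)))
          * (B.submatrix e id).det := by rw [Finset.sum_mul]
    _ = (A.submatrix id e).det * (B.submatrix e id).det := by
        congr 1
        rw [← Matrix.det_transpose, Matrix.det_apply']
        refine Finset.sum_congr rfl fun σ _ => ?_
        rfl

/-- The Cauchy–Binet formula. -/
lemma cauchyBinet [CommRing K] {m N : ℕ} (A : Matrix (Fin m) (Fin N) K)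
    (B : Matrix (Fin N) (Fin m) K) :
    (A * B).det = ∑ S : {s : Finset (Fin N) // s.card = m},
      (A.submatrix id (S.1.orderEmbOfFin S.2)).det *
      (B.submatrix (S.1.orderEmbOfFin S.2) id).det := by
  classical
  have h1 : (A * B).det = ∑ g : Fin m → Fin N, (∏ i, A i (g i)) * (B.submatrix g id).det := by
    have hAB : (A * B) = Matrix.of fun i => ∑ k, A i k • B k := by
      ext i j; simp [Matrix.mul_apply]
    rw [hAB]
    have h0 : (Matrix.of fun i => ∑ k, A i k • B k).det
        = (Matrix.detRowAlternating : (Fin m → K) [⋀^Fin m]→ₗ[K] K)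
            (fun i => ∑ k : Fin N, A i k • B k) := rfl
    rw [h0]
    have h2 := (Matrix.detRowAlternating : (Fin m → K) [⋀^Fin m]→ₗ[K] K).toMultilinearMap.map_sum
      (g := fun i (k : Fin N) => A i k • B k)
    rw [AlternatingMap.coe_multilinearMap] at h2
    rw [h2]
    refine Finset.sum_congr rfl fun g _ => ?_
    have h3 := (Matrix.detRowAlternating :
      (Fin m → K) [⋀^Fin m]→ₗ[K] K).toMultilinearMap.map_smul_univ
      (fun i => A i (g i)) (fun i => B (g i))
    rw [AlternatingMap.coe_multilinearMap] at h3
    rw [h3, smul_eq_mul]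
    rfl
  rw [h1, ← Finset.sum_filter_add_sum_filter_not Finset.univ
    (fun g : Fin m → Fin N => Function.Injective g)]
  have hzero : ∑ g ∈ Finset.univ.filter
      (fun g : Fin m → Fin N => ¬ Function.Injective g),
      (∏ i, A i (g i)) * (B.submatrix g id).det = 0 := by
    refine Finset.sum_eq_zero fun g hg => ?_
    simp only [Finset.mem_filter, Finset.mem_univ, true_and] at hg
    obtain ⟨i, j, hgij, hij⟩ := Function.not_injective_iff.mp hg
    have : (B.submatrix g id).det = 0 :=
      Matrix.det_zero_of_row_eq hij (by ext t; simp [Matrix.submatrix_apply, hgij])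
    rw [this, mul_zero]
  rw [hzero, add_zero,
    sum_injective_eq (fun g => (∏ i, A i (g i)) * (B.submatrix g id).det),
    Fintype.sum_prod_type]
  exact Finset.sum_congr rfl fun S _ => key_perm_sum A B S

lemma compound_mul [CommRing K] {n : ℕ} (k : ℕ) (A B : Matrix (Fin n) (Fin n) K) :
    compound k (A * B) = compound k A * compound k B := by
  ext S T
  have h : (A * B).submatrix (S.1.orderEmbOfFin S.2) (T.1.orderEmbOfFin T.2)
      = (A.submatrix (S.1.orderEmbOfFin S.2) id) * (B.submatrix id (T.1.orderEmbOfFin T.2)) := by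
    ext i j; simp [Matrix.mul_apply]
  show ((A * B).submatrix _ _).det = _
  rw [h, cauchyBinet]
  rfl

lemma compound_diagonal [CommRing K] [DecidableEq K] {n : ℕ} (k : ℕ) (d : Fin n → K) :
    compound k (Matrix.diagonal d)
      = Matrix.diagonal (fun S : {s : Finset (Fin n) // s.card = k} => ∏ i ∈ S.1, d i) := by
  classical
  ext S T
  by_cases hST : S = T
  · subst hST
    show ((Matrix.diagonal d).submatrix _ _).det = _
    have h : (Matrix.diagonal d).submatrix (S.1.orderEmbOfFin S.2) (S.1.orderEmbOfFin S.2)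
        = Matrix.diagonal (fun i => d (S.1.orderEmbOfFin S.2 i)) := by
      ext i j
      rcases eq_or_ne i j with rfl | hij
      · simp
      · have : S.1.orderEmbOfFin S.2 i ≠ S.1.orderEmbOfFin S.2 j :=
          fun hc => hij ((S.1.orderEmbOfFin S.2).injective hc)
        simp [Matrix.diagonal_apply_ne _ this, Matrix.diagonal_apply_ne _ hij]
    rw [h, Matrix.det_diagonal, Matrix.diagonal_apply_eq]
    calc ∏ i : Fin k, d (S.1.orderEmbOfFin S.2 i)
        = ∏ x ∈ Finset.univ.image (S.1.orderEmbOfFin S.2), d x :=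
          (Finset.prod_image (fun a _ b _ hab => (S.1.orderEmbOfFin S.2).injective hab)).symm
      _ = ∏ i ∈ S.1, d i := by rw [image_univ_orderEmbOfFin]
  · rw [Matrix.diagonal_apply_ne _ hST]
    obtain ⟨x, hxS, hxT⟩ : ∃ x, x ∈ S.1 ∧ x ∉ T.1 := by
      by_contra hc
      push_neg at hc
      exact hST (Subtype.ext (Finset.eq_of_subset_of_card_le hc (by rw [S.2, T.2])))
    obtain ⟨i, hi⟩ : ∃ i, S.1.orderEmbOfFin S.2 i = x := by
      have : x ∈ Set.range (S.1.orderEmbOfFin S.2) := by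
        rw [Finset.range_orderEmbOfFin]; exact hxS
      exact this
    refine Matrix.det_eq_zero_of_row_eq_zero i fun j => ?_
    have : S.1.orderEmbOfFin S.2 i ≠ T.1.orderEmbOfFin T.2 j := by
      rw [hi]; intro hc; exact hxT (hc ▸ Finset.orderEmbOfFin_mem T.1 T.2 j)
    simp [compound, Matrix.submatrix_apply, Matrix.diagonal_apply_ne _ this]

lemma compound_one [CommRing K] [DecidableEq K] {n : ℕ} (k : ℕ) :
    compound k (1 : Matrix (Fin n) (Fin n) K) = 1 := by
  rw [← Matrix.diagonal_one, compound_diagonal]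
  simp

lemma card_subsets_card_eq {n k : ℕ} (s : Finset (Fin n)) :
    Fintype.card {S : {t : Finset (Fin n) // t.card = k} // S.1 ⊆ s} = s.card.choose k := by
  classical
  have e : {S : {t : Finset (Fin n) // t.card = k} // S.1 ⊆ s}
      ≃ {t // t ∈ s.powersetCard k} :=
    { toFun := fun S => ⟨S.1.1, Finset.mem_powersetCard.mpr ⟨S.2, S.1.2⟩⟩
      invFun := fun T => ⟨⟨T.1, (Finset.mem_powersetCard.mp T.2).2⟩,
        (Finset.mem_powersetCard.mp T.2).1⟩
      left_inv := fun S => rfl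
      right_inv := fun T => rfl }
  rw [Fintype.card_congr e, Fintype.card_coe, Finset.card_powersetCard]

lemma rank_compound [Field K] {n : ℕ} (k : ℕ) (A : Matrix (Fin n) (Fin n) K) :
    (compound k A).rank = (A.rank).choose k := by
  classical
  obtain ⟨L, L', D, hA⟩ := Matrix.Pivot.exists_list_transvec_mul_diagonal_mul_list_transvec A
  set P := (L.map Matrix.TransvectionStruct.toMatrix).prod with hPdef
  set Q := (L'.map Matrix.TransvectionStruct.toMatrix).prod with hQdef
  have hP : IsUnit P.det := by
    rw [hPdef, Matrix.TransvectionStruct.det_toMatrix_prod]; exact isUnit_one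
  have hQ : IsUnit Q.det := by
    rw [hQdef, Matrix.TransvectionStruct.det_toMatrix_prod]; exact isUnit_one
  have hrankA : A.rank = Fintype.card {i // D i ≠ 0} := by
    rw [hA, Matrix.rank_mul_eq_left_of_isUnit_det _ _ hQ,
      Matrix.rank_mul_eq_right_of_isUnit_det _ _ hP, Matrix.rank_diagonal]
  have hcomp : compound k A = compound k P * compound k (Matrix.diagonal D) * compound k Q := by
    rw [hA, compound_mul, compound_mul]
  have hPc : IsUnit (compound k P).det := by
    refine Matrix.isUnit_det_of_right_inverse (B := compound k P⁻¹) ?_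
    rw [← compound_mul, Matrix.mul_nonsing_inv _ hP, compound_one]
  have hQc : IsUnit (compound k Q).det := by
    refine Matrix.isUnit_det_of_right_inverse (B := compound k Q⁻¹) ?_
    rw [← compound_mul, Matrix.mul_nonsing_inv _ hQ, compound_one]
  rw [hcomp, Matrix.rank_mul_eq_left_of_isUnit_det _ _ hQc,
    Matrix.rank_mul_eq_right_of_isUnit_det _ _ hPc, compound_diagonal, Matrix.rank_diagonal]
  set s : Finset (Fin n) := Finset.univ.filter (fun i => D i ≠ 0) with hs
  have h1 : Fintype.card {i // D i ≠ 0} = s.card := Fintype.card_subtype _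
  have h2 : Fintype.card {S : {t : Finset (Fin n) // t.card = k} // ∏ i ∈ S.1, D i ≠ 0}
      = Fintype.card {S : {t : Finset (Fin n) // t.card = k} // S.1 ⊆ s} := by
    refine Fintype.card_congr (Equiv.subtypeEquivRight fun S => ?_)
    rw [Finset.prod_ne_zero_iff]
    constructor
    · intro h i hi; rw [hs]; simp only [Finset.mem_filter, Finset.mem_univ, true_and]
      exact h i hi
    · intro h i hi
      have := h hi
      rw [hs] at this
      simp only [Finset.mem_filter, Finset.mem_univ, true_and] at this
      exact this
  rw [hrankA, h1, h2, card_subsets_card_eq]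

end Aux

/-- If `A` is an `n × n` matrix over `K` (`K = ℝ` or `ℂ`) with `rank A = n - k` for some
`1 ≤ k ≤ n - 1`, then for every `j ∈ {1, …, n-1}` with `j ≥ k`,
`rank (adj_j A) = C(n-k, n-j)`.  In particular `rank (adj_k A) = 1`. -/


theorem rank_adjCompound_eq_choose
    {K : Type*} [RCLike K] {n k : ℕ} (hk1 : 1 ≤ k) (hk2 : k ≤ n - 1)
    (A : Matrix (Fin n) (Fin n) K) (hrank : A.rank = n - k)
    (j : ℕ) (hj1 : 1 ≤ j) (hj2 : j ≤ n - 1) (hjk : k ≤ j) :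
    (adjCompound j A).rank = (n - k).choose (n - j) := by
  classical
  have hn2 : 2 ≤ n := by
    rcases Nat.lt_or_ge n 2 with h | h
    · interval_cases n <;> omega
    · exact h
  have hjn : j ≤ n := le_trans hj2 (Nat.sub_le n 1)
  set m := n - j with hm
  -- the complement bijection
  let c : {s : Finset (Fin n) // s.card = j} ≃ {s : Finset (Fin n) // s.card = m} :=
    { toFun := fun S => ⟨S.1ᶜ, by
        simp [Finset.card_compl, S.2, hm]⟩
      invFun := fun T => ⟨T.1ᶜ, by
        have hT := T.2
        simp only [Finset.card_compl, Fintype.card_fin, hT] at *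
        omega⟩
      left_inv := fun S => Subtype.ext (compl_compl S.1)
      right_inv := fun T => Subtype.ext (compl_compl T.1) }
  -- the sign diagonal
  let ε : {s : Finset (Fin n) // s.card = j} → K :=
    fun S => (-1 : K) ^ (∑ i ∈ S.1, (i : ℕ))
  have hdec : adjCompound j A
      = Matrix.diagonal ε * ((compound m A)ᵀ.submatrix (fun S => c S) (fun T => c T))
          * Matrix.diagonal ε := by
    ext S T
    rw [Matrix.mul_diagonal, Matrix.diagonal_mul, Matrix.submatrix_apply,
      Matrix.transpose_apply]
    show adjCompound j A S T = ε S * (compound m A (c T) (c S)) * ε T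
    unfold ε
    show adjCompound j A S T
      = (-1 : K) ^ (∑ i ∈ S.1, (i : ℕ)) * (compound m A (c T) (c S))
          * (-1 : K) ^ (∑ i ∈ T.1, (i : ℕ))
    rw [adjCompound]
    have hdet : compound m A (c T) (c S)
        = (A.submatrix
            ((T.1ᶜ).orderEmbOfFin (show (T.1ᶜ).card = n - j by
              simp [Finset.card_compl, T.2]))
            ((S.1ᶜ).orderEmbOfFin (show (S.1ᶜ).card = n - j by
              simp [Finset.card_compl, S.2]))).det := rfl
    rw [hdet, pow_add]
    ring
  have hεdet : IsUnit (Matrix.diagonal ε).det := by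
    rw [Matrix.det_diagonal]
    refine (Finset.prod_ne_zero_iff.mpr fun S _ => ?_).isUnit
    exact pow_ne_zero _ (neg_ne_zero.mpr one_ne_zero)
  rw [hdec, Matrix.rank_mul_eq_left_of_isUnit_det _ _ hεdet,
    Matrix.rank_mul_eq_right_of_isUnit_det _ _ hεdet,
    Matrix.rank_submatrix _ c c, Matrix.rank_transpose, rank_compound, hrank]
end

section
/- Let A be an arbitrary n × n matrix over K (K = ℝ or ℂ) and let P(λ) = det(A − λI) be its characteristic polynomial. Then for every j = 1, …, n and every λ ∈ K, the j-th derivative of P satisfies P⁽ʲ⁾(λ) = (−1)ʲ · j! · tr(adj_j(A − λI)). -/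
open Matrix Polynomial

variable {K : Type*}

section Aux
variable {R : Type*} [CommRing R] {n : ℕ}

lemma det_submatrix_orderEmbOfFin (B : Matrix (Fin n) (Fin n) R) (s : Finset (Fin n))
    {k : ℕ} (h : s.card = k) :
    (B.submatrix (s.orderEmbOfFin h) (s.orderEmbOfFin h)).det
      = (B.submatrix (fun i : {x // x ∈ s} => (i : Fin n)) (fun i : {x // x ∈ s} => (i : Fin n))).det := by
  have he : B.submatrix (s.orderEmbOfFin h) (s.orderEmbOfFin h)
      = (B.submatrix (fun i : {x // x ∈ s} => (i : Fin n)) (fun i : {x // x ∈ s} => (i : Fin n))).submatrix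
        (fun i : Fin k => (s.orderIsoOfFin h) i) (fun i : Fin k => (s.orderIsoOfFin h) i) := by
    ext i j
    simp [Matrix.submatrix_apply]
  rw [he]
  exact Matrix.det_submatrix_equiv_self (s.orderIsoOfFin h).toEquiv _

lemma detPoly_eq_sum (B : Matrix (Fin n) (Fin n) R) :
    detPoly B = ∑ s : Finset (Fin n), (-(X : R[X])) ^ (n - s.card) *
      C (B.submatrix (fun i : {x // x ∈ s} => (i : Fin n)) (fun j : {x // x ∈ s} => (j : Fin n))).det := by
  classical
  set M₁ : Matrix (Fin n) (Fin n) R[X] := Matrix.of fun i j => C (B i j) with hM₁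
  set M₂ : Matrix (Fin n) (Fin n) R[X] := -((X : R[X]) • 1) with hM₂
  have h0 : detPoly B = (M₁ + M₂).det := by
    rw [detPoly, sub_eq_add_neg]
  have h1 : (M₁ + M₂).det = ∑ s : Finset (Fin n),
      Matrix.det (s.piecewise M₁ M₂ : Matrix (Fin n) (Fin n) R[X]) := by
    exact (Matrix.detRowAlternating : AlternatingMap R[X] (Fin n → R[X]) R[X] (Fin n)
      ).toMultilinearMap.map_add_univ M₁ M₂
  rw [h0, h1]
  refine Finset.sum_congr rfl fun s _ => ?_
  set N : Matrix (Fin n) (Fin n) R[X] := (s.piecewise M₁ M₂ : Matrix (Fin n) (Fin n) R[X]) with hN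
  have hzero : ∀ i, ¬ i ∈ s → ∀ j, j ∈ s → N i j = 0 := by
    intro i hi j hj
    have hrow : N i = M₂ i := Finset.piecewise_eq_of_notMem _ _ _ hi
    have hij : i ≠ j := fun h => hi (h ▸ hj)
    rw [hrow, hM₂]
    simp [Matrix.one_apply, hij]
  rw [Matrix.twoBlockTriangular_det N (fun i => i ∈ s) hzero]
  have hblock1 : Matrix.toSquareBlockProp N (fun i => i ∈ s)
      = (C : R →+* R[X]).mapMatrix
          (B.submatrix (fun i : {x // x ∈ s} => (i : Fin n)) (fun j : {x // x ∈ s} => (j : Fin n))) := by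
    ext i j
    have hrow : N (i : Fin n) = M₁ (i : Fin n) := Finset.piecewise_eq_of_mem _ _ _ i.2
    simp [Matrix.toSquareBlockProp, hrow, hM₁]
  have hblock2 : Matrix.toSquareBlockProp N (fun i => ¬ i ∈ s)
      = (-(X : R[X])) • (1 : Matrix {a // ¬ a ∈ s} {a // ¬ a ∈ s} R[X]) := by
    ext i j
    have hrow : N (i : Fin n) = M₂ (i : Fin n) := Finset.piecewise_eq_of_notMem _ _ _ i.2
    have : ((i : Fin n) = (j : Fin n)) ↔ i = j := by
      constructor
      · intro h; exact Subtype.ext h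
      · intro h; exact congrArg _ h
    simp [Matrix.toSquareBlockProp, hrow, hM₂, Matrix.one_apply, this]
    by_cases h : i = j <;> simp [h]
  have hdet1 : (Matrix.toSquareBlockProp N (fun i => i ∈ s)).det
      = C ((B.submatrix (fun i : {x // x ∈ s} => (i : Fin n)) (fun j : {x // x ∈ s} => (j : Fin n))).det) := by
    rw [hblock1]; exact ((C : R →+* R[X]).map_det _).symm
  have hcard : Fintype.card {a : Fin n // ¬ a ∈ s} = n - s.card := by
    rw [Fintype.card_subtype_compl]
    simp [Fintype.card_coe]
  simp only [hblock2, Matrix.det_smul, Matrix.det_one, hcard, mul_one]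
  rw [mul_comm]
  congr 1
  convert hdet1 using 2

end Aux

section Aux2
variable {R : Type*} [CommRing R] {n : ℕ}

lemma coeff_detPoly (B : Matrix (Fin n) (Fin n) R) (j : ℕ) (hj : j ≤ n) :
    (detPoly B).coeff j = (-1 : R) ^ j * Matrix.trace (adjCompound j B) := by
  classical
  -- trace side
  have htr : Matrix.trace (adjCompound j B)
      = ∑ T : {t : Finset (Fin n) // t.card = j},
          (B.submatrix (fun i : {x // x ∈ (T.1ᶜ : Finset (Fin n))} => (i : Fin n))
            (fun i : {x // x ∈ (T.1ᶜ : Finset (Fin n))} => (i : Fin n))).det := by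
    rw [Matrix.trace]
    refine Finset.sum_congr rfl fun T _ => ?_
    show adjCompound j B T T = _
    rw [adjCompound, Even.neg_one_pow ⟨_, rfl⟩, one_mul, det_submatrix_orderEmbOfFin]
  have htr2 : Matrix.trace (adjCompound j B)
      = ∑ t ∈ Finset.univ.filter (fun t : Finset (Fin n) => t.card = j),
          (B.submatrix (fun i : {x // x ∈ (tᶜ : Finset (Fin n))} => (i : Fin n))
            (fun i : {x // x ∈ (tᶜ : Finset (Fin n))} => (i : Fin n))).det := by
    rw [htr]
    exact (Finset.sum_subtype _ (fun x => by simp)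
      (fun t => (B.submatrix (fun i : {x // x ∈ (tᶜ : Finset (Fin n))} => (i : Fin n))
        (fun i : {x // x ∈ (tᶜ : Finset (Fin n))} => (i : Fin n))).det)).symm
  rw [htr2, detPoly_eq_sum, Polynomial.finset_sum_coeff]
  have hterm : ∀ s : Finset (Fin n),
      ((-(X : R[X])) ^ (n - s.card) *
        C ((B.submatrix (fun i : {x // x ∈ s} => (i : Fin n))
            (fun i : {x // x ∈ s} => (i : Fin n))).det)).coeff j
      = if s.card = n - j then
          (-1 : R) ^ j * (B.submatrix (fun i : {x // x ∈ s} => (i : Fin n))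
            (fun i : {x // x ∈ s} => (i : Fin n))).det
        else 0 := by
    intro s
    have hsle : s.card ≤ n := by
      simpa using Finset.card_le_univ s
    have hx : ((-(X : R[X])) ^ (n - s.card)).coeff j
        = if j = n - s.card then (-1 : R) ^ (n - s.card) else 0 := by
      rw [neg_pow, show ((-1 : R[X]) ^ (n - s.card)) = C ((-1 : R) ^ (n - s.card)) by simp,
        coeff_C_mul, coeff_X_pow]
      split <;> simp
    rw [mul_comm, coeff_C_mul, hx]
    have hiff : (j = n - s.card) ↔ (s.card = n - j) := by
      constructor
      · intro h; rw [h, Nat.sub_sub_self hsle]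
      · intro h; rw [h, Nat.sub_sub_self hj]
    by_cases h : s.card = n - j
    · have h' : j = n - s.card := hiff.mpr h
      rw [if_pos h', if_pos h, ← h', mul_comm]
    · rw [if_neg (fun h' => h (hiff.mp h')), if_neg h, mul_zero]
  rw [Finset.sum_congr rfl fun s _ => hterm s, Finset.sum_ite, Finset.sum_const_zero, add_zero,
    Finset.mul_sum]
  refine Finset.sum_nbij' (fun s => sᶜ) (fun t => tᶜ) ?_ ?_ ?_ ?_ ?_
  · intro s hs
    simp only [Finset.mem_filter, Finset.mem_univ, true_and] at hs ⊢
    rw [Finset.card_compl, hs, Fintype.card_fin, Nat.sub_sub_self hj]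
  · intro t ht
    simp only [Finset.mem_filter, Finset.mem_univ, true_and] at ht ⊢
    rw [Finset.card_compl, ht, Fintype.card_fin]
  · intro s _; exact compl_compl s
  · intro t _; exact compl_compl t
  · intro s _
    congr 1
    rw [compl_compl]

end Aux2

section Aux3
variable {R : Type*} [CommRing R] {n : ℕ}

lemma detPoly_comp_X_add_C (A : Matrix (Fin n) (Fin n) R) (lam : R) :
    (detPoly A).comp (X + C lam) = detPoly (A - lam • 1) := by
  classical
  have h : (detPoly A).comp (X + C lam)
      = (eval₂RingHom (C : R →+* R[X]) (X + C lam))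
          ((Matrix.of fun i j => Polynomial.C (A i j)) - (Polynomial.X : Polynomial R) • 1).det := rfl
  rw [h, RingHom.map_det, detPoly]
  congr 1
  ext i j
  by_cases hij : i = j
  · subst hij
    simp [Matrix.sub_apply, Matrix.smul_apply, Matrix.one_apply, map_sub, C_sub]
    ring
  · simp [Matrix.sub_apply, Matrix.smul_apply, Matrix.one_apply, hij]

lemma iterate_derivative_comp_X_add_C (p : R[X]) (lam : R) (j : ℕ) :
    Polynomial.derivative^[j] (p.comp (X + C lam))
      = (Polynomial.derivative^[j] p).comp (X + C lam) := by
  induction j generalizing p with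
  | zero => rfl
  | succ k ih =>
      rw [Function.iterate_succ_apply, Function.iterate_succ_apply, derivative_comp]
      simp only [derivative_add, derivative_X, derivative_C, add_zero, one_mul]
      exact ih _

end Aux3


/-- For an arbitrary `n × n` matrix `A` over `K` (`K = ℝ` or `ℂ`) with characteristic
polynomial `P(λ) = det (A - λI)`, and for every `j = 1, …, n` and every `λ ∈ K`,
`P⁽ʲ⁾(λ) = (-1)^j j! tr (adj_j (A - λI))`. -/
theorem iterated_deriv_charpoly_eq_trace_adjCompound
    {K : Type*} [RCLike K] {n : ℕ} (A : Matrix (Fin n) (Fin n) K)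
    (j : ℕ) (hj1 : 1 ≤ j) (hj2 : j ≤ n) (lam : K) :
    (Polynomial.derivative^[j] (detPoly A)).eval lam =
      (-1 : K) ^ j * (Nat.factorial j : K) *
        Matrix.trace (adjCompound j (A - lam • 1)) := by
  have h1 : (Polynomial.derivative^[j] (detPoly A)).eval lam
      = (Polynomial.derivative^[j] (detPoly (A - lam • 1))).eval 0 := by
    rw [← detPoly_comp_X_add_C, iterate_derivative_comp_X_add_C, eval_comp]
    simp
  rw [h1, ← Polynomial.coeff_zero_eq_eval_zero, Polynomial.coeff_iterate_derivative,
    zero_add, Nat.descFactorial_self, coeff_detPoly _ j hj2, nsmul_eq_mul]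
  ring
end

section
/- Let A be an n × n matrix over a field K (K = ℝ or ℂ) with rank A = n − k for some 1 ≤ k ≤ n − 1. Then adj_k(A) = u vᵀ for nonzero vectors u, v ∈ K^C(n,k), where u spans (i.e., is a basis of) the one-dimensional space ⋀^k ker(A) and v spans the one-dimensional space ⋀^k ker(Aᵀ), both identified with subspaces of K^C(n,k) via Plücker coordinates. -/
open Matrix

variable {K : Type*}

/-!
Factor `A = C * R` through its column space, with `C` of full column rank and `R` of full row
rank `r = n - k`. Then `ker A = ker R`, `ker Aᵀ = ker Cᵀ`, and by `det_mul` every entry of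
`adj_k A` is the product of a signed complementary maximal minor `(-1)^{ΣS} det R[:, Sᶜ]` of `R`
and one of `Cᵀ`. These minors are, up to a common nonzero factor, the Plücker coordinates of
`ker R`: complete `R` to an invertible `Q` by unit rows; the columns of `Q⁻¹` indexed by those
unit rows span `ker R`, and Jacobi's complementary minor formula
`det Q * det (Q⁻¹)[S, L] = ± det Q[Lᶜ, Sᶜ]` computes their Plücker coordinates. The common factor
is absorbed by rescaling one basis vector.

The signs come from the permutation listing `S` increasingly and then `Sᶜ` increasingly; its
sign is `(-1)^{ΣS}` up to a factor depending only on `#S`, because moving an element of `S` one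
step down composes it with an adjacent transposition.
-/

open Finset

section Shuffle

variable {α : Type*} [LinearOrder α] {k m : ℕ}

lemma orderEmbOfFin_eq_of_map_eq {β : Type*} [LinearOrder β] {f : α ↪ β} {S : Finset α}
    {T : Finset β} (hf : StrictMonoOn f S) (hT : S.map f = T) (hS : #S = k) (hT' : #T = k)
    (i : Fin k) : T.orderEmbOfFin hT' i = f (S.orderEmbOfFin hS i) := by
  refine (congrFun (orderEmbOfFin_unique hT' (f := fun j => f (S.orderEmbOfFin hS j))
    (fun j => ?_) fun i j hij => ?_) i).symm
  · exact hT ▸ mem_map_of_mem f (orderEmbOfFin_mem S hS j)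
  · exact hf (orderEmbOfFin_mem S hS i) (orderEmbOfFin_mem S hS j)
      ((S.orderEmbOfFin hS).strictMono hij)

variable [Fintype α]

lemma compl_map_equiv (σ : Equiv.Perm α) (S : Finset α) :
    (S.map σ.toEmbedding)ᶜ = Sᶜ.map σ.toEmbedding := by
  ext x
  simp [mem_map_equiv]

lemma orderEmbOfFin_ne_orderEmbOfFin_compl (S : Finset α) (hS : #S = k) (hSc : #Sᶜ = m)
    (i : Fin k) (j : Fin m) : S.orderEmbOfFin hS i ≠ Sᶜ.orderEmbOfFin hSc j := fun h =>
  mem_compl.mp (h ▸ orderEmbOfFin_mem Sᶜ hSc j) (orderEmbOfFin_mem S hS i)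

noncomputable def shuffleEquiv (S : Finset α) (hS : #S = k) (hSc : #Sᶜ = m) :
    Fin k ⊕ Fin m ≃ α :=
  ((S.orderIsoOfFin hS).toEquiv.sumCongr
    ((Sᶜ.orderIsoOfFin hSc).toEquiv.trans (Equiv.subtypeEquivRight fun _ => mem_compl))).trans
    (Equiv.sumCompl (· ∈ S))

@[simp]
lemma shuffleEquiv_inl (S : Finset α) (hS : #S = k) (hSc : #Sᶜ = m) (i : Fin k) :
    shuffleEquiv S hS hSc (Sum.inl i) = S.orderEmbOfFin hS i := rfl

@[simp]
lemma shuffleEquiv_inr (S : Finset α) (hS : #S = k) (hSc : #Sᶜ = m) (i : Fin m) :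
    shuffleEquiv S hS hSc (Sum.inr i) = Sᶜ.orderEmbOfFin hSc i := rfl

@[simp]
lemma shuffleEquiv_symm_orderEmbOfFin (S : Finset α) (hS : #S = k) (hSc : #Sᶜ = m)
    (i : Fin k) : (shuffleEquiv S hS hSc).symm (S.orderEmbOfFin hS i) = Sum.inl i :=
  (shuffleEquiv S hS hSc).symm_apply_eq.mpr rfl

@[simp]
lemma shuffleEquiv_symm_orderEmbOfFin_compl (S : Finset α) (hS : #S = k) (hSc : #Sᶜ = m)
    (i : Fin m) : (shuffleEquiv S hS hSc).symm (Sᶜ.orderEmbOfFin hSc i) = Sum.inr i :=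
  (shuffleEquiv S hS hSc).symm_apply_eq.mpr rfl

lemma shuffleEquiv_map (σ : Equiv.Perm α) {S : Finset α} (hσS : StrictMonoOn σ S)
    (hσSc : StrictMonoOn σ ↑Sᶜ) (hS : #S = k) (hSc : #Sᶜ = m)
    (hS' : #(S.map σ.toEmbedding) = k) (hSc' : #(S.map σ.toEmbedding)ᶜ = m) :
    shuffleEquiv (S.map σ.toEmbedding) hS' hSc' = (shuffleEquiv S hS hSc).trans σ := by
  ext (i | i)
  · exact orderEmbOfFin_eq_of_map_eq hσS rfl hS hS' i
  · exact orderEmbOfFin_eq_of_map_eq hσSc (compl_map_equiv σ S).symm hSc hSc' i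

end Shuffle

section Sign

variable {n k m : ℕ}

lemma strictMonoOn_swap_of_succ_eq {t s : Fin n} (hts : (t : ℕ) + 1 = s) {U : Set (Fin n)}
    (hU : ¬ (t ∈ U ∧ s ∈ U)) : StrictMonoOn (Equiv.swap t s) U := by
  intro a ha b hb hab
  rw [Fin.lt_def] at hab ⊢
  simp only [Equiv.swap_apply_def]
  split_ifs <;> subst_vars <;> first | omega | tauto

lemma sum_map_swap_add_one {S : Finset (Fin n)} {t s : Fin n} (hs : s ∈ S) (ht : t ∉ S)
    (hts : (t : ℕ) + 1 = s) :
    ∑ i ∈ S.map (Equiv.swap t s).toEmbedding, (i : ℕ) + 1 = ∑ i ∈ S, (i : ℕ) := by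
  have hfix : ∀ i ∈ S.erase s, ((Equiv.swap t s) i : ℕ) = i := fun i hi => by
    rw [Equiv.swap_apply_of_ne_of_ne (ne_of_mem_of_not_mem (mem_of_mem_erase hi) ht)
      (ne_of_mem_erase hi)]
  rw [sum_map, ← add_sum_erase S _ hs, ← add_sum_erase S _ hs, Equiv.toEmbedding_apply,
    Equiv.swap_apply_right]
  simp only [Equiv.toEmbedding_apply, sum_congr rfl hfix]
  linarith

lemma isLowerSet_of_forall_pred_mem {S : Finset (Fin n)}
    (h : ∀ s ∈ S, ∀ t : Fin n, (t : ℕ) + 1 = s → t ∈ S) : IsLowerSet (S : Set (Fin n)) := by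
  intro s t hts hs
  obtain ⟨d, hd⟩ := Nat.exists_eq_add_of_le (Fin.le_iff_val_le_val.mp hts)
  clear hts
  induction d generalizing t with
  | zero => exact Fin.ext hd.symm ▸ hs
  | succ d ih => exact h _ (ih (t := ⟨(t : ℕ) + 1, by omega⟩) (by simp; omega)) t rfl

lemma exists_pred_notMem_of_not_isLowerSet {S : Finset (Fin n)}
    (h : ¬ IsLowerSet (S : Set (Fin n))) : ∃ s ∈ S, ∃ t ∉ S, (t : ℕ) + 1 = s := by
  contrapose! h
  exact isLowerSet_of_forall_pred_mem fun s hs t hts => by_contra fun ht => h s hs t ht hts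

lemma eq_of_isLowerSet_of_card_eq {S T : Finset (Fin n)} (hS : IsLowerSet (S : Set (Fin n)))
    (hT : IsLowerSet (T : Set (Fin n))) (h : #S = #T) : S = T := by
  rcases le_total (⟨_, hS⟩ : LowerSet (Fin n)) ⟨_, hT⟩ with hle | hle
  · exact eq_of_subset_of_card_le (coe_subset.mp hle) h.ge
  · exact (eq_of_subset_of_card_le (coe_subset.mp hle) h.le).symm

lemma shuffleEquiv_map_swap {S : Finset (Fin n)} {s t : Fin n} (hs : s ∈ S) (ht : t ∉ S)
    (hts : (t : ℕ) + 1 = s) (hS : #S = k) (hSc : #Sᶜ = m)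
    (hS' : #(S.map (Equiv.swap t s).toEmbedding) = k)
    (hSc' : #(S.map (Equiv.swap t s).toEmbedding)ᶜ = m) :
    shuffleEquiv (S.map (Equiv.swap t s).toEmbedding) hS' hSc' =
      (shuffleEquiv S hS hSc).trans (Equiv.swap t s) :=
  shuffleEquiv_map _ (strictMonoOn_swap_of_succ_eq hts (by simp [ht]))
    (strictMonoOn_swap_of_succ_eq hts (by simp [hs])) hS hSc hS' hSc'

theorem sign_shuffleEquiv_symm_trans {S T : Finset (Fin n)} (hS : #S = k) (hSc : #Sᶜ = m)
    (hT : #T = k) (hTc : #Tᶜ = m) :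
    Equiv.Perm.sign ((shuffleEquiv S hS hSc).symm.trans (shuffleEquiv T hT hTc)) =
      (-1) ^ (∑ i ∈ S, (i : ℕ) + ∑ i ∈ T, (i : ℕ)) := by
  induction hN : ∑ i ∈ S, (i : ℕ) + ∑ i ∈ T, (i : ℕ) using Nat.strong_induction_on
    generalizing S T with
  | _ N ih =>
  by_cases hSlow : IsLowerSet (S : Set (Fin n))
  · by_cases hTlow : IsLowerSet (T : Set (Fin n))
    · obtain rfl := eq_of_isLowerSet_of_card_eq hSlow hTlow (hS.trans hT.symm)
      simp [← hN, Even.neg_one_pow ⟨_, rfl⟩]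
    · obtain ⟨s, hs, t, ht, hts⟩ := exists_pred_notMem_of_not_isLowerSet hTlow
      have hsum := sum_map_swap_add_one hs ht hts
      have hT' : #(T.map (Equiv.swap t s).toEmbedding) = k := (card_map _).trans hT
      have hTc' : #(T.map (Equiv.swap t s).toEmbedding)ᶜ = m := by
        rw [compl_map_equiv, card_map, hTc]
      have key := ih _ (by omega) hS hSc hT' hTc' rfl
      rw [shuffleEquiv_map_swap hs ht hts hT hTc, ← Equiv.trans_assoc, Equiv.Perm.sign_trans,
        Equiv.Perm.sign_swap (by omega)] at key
      rw [← hN, ← hsum, ← add_assoc, pow_succ, ← key]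
      simp
  · obtain ⟨s, hs, t, ht, hts⟩ := exists_pred_notMem_of_not_isLowerSet hSlow
    have hsum := sum_map_swap_add_one hs ht hts
    have hS' : #(S.map (Equiv.swap t s).toEmbedding) = k := (card_map _).trans hS
    have hSc' : #(S.map (Equiv.swap t s).toEmbedding)ᶜ = m := by
      rw [compl_map_equiv, card_map, hSc]
    have key := ih _ (by omega) hS' hSc' hT hTc rfl
    rw [shuffleEquiv_map_swap hs ht hts hS hSc, Equiv.symm_trans, Equiv.trans_assoc,
      Equiv.Perm.sign_trans, Equiv.Perm.sign_symm, Equiv.Perm.sign_swap (by omega)] at key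
    rw [← hN, ← hsum, add_right_comm, pow_succ, ← key]
    simp

end Sign

section Determinant

variable [CommRing K] {n k m : ℕ}

theorem det_fromBlocks_submatrix_orderEmbOfFin (M : Matrix (Fin n) (Fin n) K)
    {S L : Finset (Fin n)} (hS : #S = k) (hSc : #Sᶜ = m) (hL : #L = k) (hLc : #Lᶜ = m) :
    (fromBlocks (M.submatrix (L.orderEmbOfFin hL) (S.orderEmbOfFin hS))
      (M.submatrix (L.orderEmbOfFin hL) (Sᶜ.orderEmbOfFin hSc))
      (M.submatrix (Lᶜ.orderEmbOfFin hLc) (S.orderEmbOfFin hS))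
      (M.submatrix (Lᶜ.orderEmbOfFin hLc) (Sᶜ.orderEmbOfFin hSc))).det =
      (-1) ^ (∑ i ∈ S, (i : ℕ) + ∑ i ∈ L, (i : ℕ)) * M.det := by
  set eL := shuffleEquiv L hL hLc
  set eS := shuffleEquiv S hS hSc
  have hblocks : fromBlocks (M.submatrix (L.orderEmbOfFin hL) (S.orderEmbOfFin hS))
      (M.submatrix (L.orderEmbOfFin hL) (Sᶜ.orderEmbOfFin hSc))
      (M.submatrix (Lᶜ.orderEmbOfFin hLc) (S.orderEmbOfFin hS))
      (M.submatrix (Lᶜ.orderEmbOfFin hLc) (Sᶜ.orderEmbOfFin hSc)) =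
      (M.submatrix (eS.symm.trans eL) id).submatrix eS eS := by
    ext (i | i) (j | j) <;> simp [eS, eL]
  rw [hblocks, det_submatrix_equiv_self, det_permute, sign_shuffleEquiv_symm_trans]
  push_cast
  ring

theorem det_mul_det_submatrix_of_mul_eq_one {Q B : Matrix (Fin n) (Fin n) K} (hQB : Q * B = 1)
    {S L : Finset (Fin n)} (hS : #S = k) (hSc : #Sᶜ = m) (hL : #L = k) (hLc : #Lᶜ = m) :
    Q.det * (B.submatrix (S.orderEmbOfFin hS) (L.orderEmbOfFin hL)).det =
      (-1) ^ (∑ i ∈ S, (i : ℕ) + ∑ i ∈ L, (i : ℕ)) *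
        (Q.submatrix (Lᶜ.orderEmbOfFin hLc) (Sᶜ.orderEmbOfFin hSc)).det := by
  -- `N` has the columns `L` of `B` at the positions `S` and is the identity elsewhere, so that
  -- `det N = det B[S, L]` while `Q * N` has the unit columns `L` at the positions `S`.
  set N := (fromCols (B.submatrix id (L.orderEmbOfFin hL))
    ((1 : Matrix (Fin n) (Fin n) K).submatrix id (Sᶜ.orderEmbOfFin hSc))).submatrix id
      (shuffleEquiv S hS hSc).symm
  have hNS (i q) : N i (S.orderEmbOfFin hS q) = B i (L.orderEmbOfFin hL q) := by simp [N]
  have hNSc (i q) : N i (Sᶜ.orderEmbOfFin hSc q) = (1 : Matrix _ _ K) i (Sᶜ.orderEmbOfFin hSc q) :=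
    by simp [N]; rfl
  have hQNS (i q) : (Q * N) i (S.orderEmbOfFin hS q) = (Q * B) i (L.orderEmbOfFin hL q) := by
    simp only [mul_apply, hNS]
  have hQNSc (i q) : (Q * N) i (Sᶜ.orderEmbOfFin hSc q) = Q i (Sᶜ.orderEmbOfFin hSc q) := by
    simp [mul_apply, hNSc, one_apply]
  have hN := det_fromBlocks_submatrix_orderEmbOfFin N hS hSc hS hSc
  have hQN := det_fromBlocks_submatrix_orderEmbOfFin (Q * N) hS hSc hL hLc
  rw [show N.submatrix (S.orderEmbOfFin hS) (S.orderEmbOfFin hS) =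
      B.submatrix (S.orderEmbOfFin hS) (L.orderEmbOfFin hL) by ext; simp [hNS],
    show N.submatrix (S.orderEmbOfFin hS) (Sᶜ.orderEmbOfFin hSc) = 0 by
      ext; simp [hNSc, one_apply_ne, orderEmbOfFin_ne_orderEmbOfFin_compl],
    show N.submatrix (Sᶜ.orderEmbOfFin hSc) (Sᶜ.orderEmbOfFin hSc) = 1 by
      ext; simp [hNSc, one_apply],
    det_fromBlocks_zero₁₂, det_one, mul_one, Even.neg_one_pow ⟨_, rfl⟩, one_mul] at hN
  rw [show (Q * N).submatrix (L.orderEmbOfFin hL) (S.orderEmbOfFin hS) = 1 by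
      ext; simp [hQNS, hQB, one_apply],
    show (Q * N).submatrix (Lᶜ.orderEmbOfFin hLc) (S.orderEmbOfFin hS) = 0 by
      ext; simp [hQNS, hQB, one_apply_ne, (orderEmbOfFin_ne_orderEmbOfFin_compl _ _ _ _ _).symm],
    show (Q * N).submatrix (Lᶜ.orderEmbOfFin hLc) (Sᶜ.orderEmbOfFin hSc) =
      Q.submatrix (Lᶜ.orderEmbOfFin hLc) (Sᶜ.orderEmbOfFin hSc) by ext; simp [hQNSc],
    det_fromBlocks_zero₂₁, det_one, one_mul, det_mul, ← hN] at hQN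
  rw [hQN, ← mul_assoc, ← pow_add, Even.neg_one_pow ⟨_, rfl⟩, one_mul]

lemma card_compl_of_add_eq {r : ℕ} (hn : r + k = n) {S : Finset (Fin n)} (hS : #S = k) :
    #Sᶜ = r := by
  rw [card_compl, Fintype.card_fin]
  omega

def complMinor {r : ℕ} (hn : r + k = n) (R : Matrix (Fin r) (Fin n) K)
    (S : {s : Finset (Fin n) // s.card = k}) : K :=
  (-1) ^ (∑ i ∈ S.1, (i : ℕ)) *
    (R.submatrix id (S.1ᶜ.orderEmbOfFin (card_compl_of_add_eq hn S.2))).det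

theorem adjCompound_mul_eq_vecMulVec_complMinor (hn : n - k + k = n)
    (C : Matrix (Fin n) (Fin (n - k)) K) (R : Matrix (Fin (n - k)) (Fin n) K) :
    adjCompound k (C * R) = vecMulVec (complMinor hn R) (complMinor hn Cᵀ) := by
  ext S T
  rw [adjCompound, vecMulVec_apply, complMinor, complMinor, submatrix_mul _ _ _ id _
    Function.bijective_id, det_mul, ← det_transpose (C.submatrix _ id), transpose_submatrix]
  ring

end Determinant

lemma span_range_units_smul {R M ι : Type*} [Semiring R] [AddCommMonoid M] [Module R M]
    (w : ι → Rˣ) (v : ι → M) :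
    Submodule.span R (Set.range (w • v)) = Submodule.span R (Set.range v) := by
  refine le_antisymm (Submodule.span_le.mpr ?_) (Submodule.span_le.mpr ?_) <;>
    rintro _ ⟨i, rfl⟩
  · exact Submodule.smul_mem _ _ (Submodule.subset_span ⟨i, rfl⟩)
  · rw [← inv_smul_smul (w i) (v i)]
    exact Submodule.smul_mem _ _ (Submodule.subset_span ⟨i, rfl⟩)

section Plucker

variable [Field K] {r k n : ℕ}

theorem wedgeVec_ne_zero {x : Fin k → Fin n → K} (hx : LinearIndependent K x) :
    wedgeVec x ≠ 0 := by
  -- Some `k` linearly independent rows of `xᵀ`, indexed by `T`, form an invertible submatrix.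
  set X : Matrix (Fin n) (Fin k) K := Matrix.transpose x
  have hspan : Module.finrank K (Submodule.span K (Set.range X.row)) = k := by
    rw [← rank_eq_finrank_span_row, rank_transpose x, hx.rank_matrix, Fintype.card_fin]
  obtain ⟨t, hts, htcard, -, htli⟩ :=
    Submodule.exists_finset_span_eq_linearIndepOn K (Set.range X.row)
  choose g hg using fun w : t => hts w.2
  have hg_inj : Function.Injective g := fun a b hab =>
    Subtype.ext ((hg a).symm.trans (hab ▸ hg b))
  set T := univ.map ⟨g, hg_inj⟩
  have hT : #T = k := by rw [card_map, card_univ, Fintype.card_coe, htcard, hspan]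
  choose τ hτ using fun q => mem_map.mp (T.orderEmbOfFin_mem hT q)
  have hτ_inj : Function.Injective τ := fun a b hab =>
    (T.orderEmbOfFin hT).injective ((hτ a).2.symm.trans (hab ▸ (hτ b).2))
  have hrows : LinearIndependent K (X.submatrix (T.orderEmbOfFin hT) id).row := by
    have : (X.submatrix (T.orderEmbOfFin hT) id).row = (fun w : t => (w : Fin k → K)) ∘ τ := by
      ext q : 1
      rw [Function.comp_apply, ← hg (τ q)]
      exact congrArg X (hτ q).2.symm
    rw [this]
    exact htli.comp τ hτ_inj
  intro h
  exact (isUnit_iff_isUnit_det _).mp (linearIndependent_rows_iff_isUnit.mp hrows) |>.ne_zero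
    (congrFun h ⟨T, hT⟩)

theorem exists_wedgeVec_eq_smul (hk : 0 < k) {x : Fin k → Fin n → K}
    (hx : LinearIndependent K x) {c : K} (hc : c ≠ 0) :
    ∃ x' : Fin k → Fin n → K, LinearIndependent K x' ∧
      Submodule.span K (Set.range x') = Submodule.span K (Set.range x) ∧
      wedgeVec x' = c • wedgeVec x := by
  set w : Fin k → Kˣ := Pi.mulSingle ⟨0, hk⟩ (Units.mk0 c hc)
  refine ⟨w • x, hx.units_smul w, span_range_units_smul w x, funext fun S => ?_⟩
  have hprod : ∏ j, (w j : K) = c := by simp [w, ← Units.coe_prod]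
  rw [Pi.smul_apply, smul_eq_mul, ← hprod]
  exact det_mul_row (fun j => (w j : K)) (of fun i j => x j (S.1.orderEmbOfFin S.2 i))

theorem exists_isUnit_rows_compl_eq (hn : r + k = n) {R : Matrix (Fin r) (Fin n) K}
    (hR : LinearIndependent K R) :
    ∃ (U : Finset (Fin n)) (_ : #U = k) (hUc : #Uᶜ = r) (Q : Matrix (Fin n) (Fin n) K),
      IsUnit Q ∧ ∀ p, Q (Uᶜ.orderEmbOfFin hUc p) = R p := by
  obtain ⟨⟨T, hUc⟩, hRU⟩ := Function.ne_iff.mp (wedgeVec_ne_zero hR)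
  obtain ⟨U, rfl⟩ : ∃ U : Finset (Fin n), Uᶜ = T := ⟨_, compl_compl T⟩
  have hU : #U = k := by
    have := card_add_card_compl U
    rw [Fintype.card_fin] at this
    omega
  -- Unit rows at the positions `U`, whose complement carries a nonvanishing maximal minor of `R`.
  set Q : Matrix (Fin n) (Fin n) K :=
    (fromRows ((1 : Matrix (Fin n) (Fin n) K).submatrix (U.orderEmbOfFin hU) id) R).submatrix
      (shuffleEquiv U hU hUc).symm id
  have hQUc (p) : Q (Uᶜ.orderEmbOfFin hUc p) = R p := by ext; simp [Q]
  refine ⟨U, hU, hUc, Q, (isUnit_iff_isUnit_det Q).mpr (isUnit_iff_ne_zero.mpr ?_), hQUc⟩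
  have hblocks := det_fromBlocks_submatrix_orderEmbOfFin Q hU hUc hU hUc
  rw [show Q.submatrix (U.orderEmbOfFin hU) (U.orderEmbOfFin hU) = 1 by
      ext; simp [Q, one_apply],
    show Q.submatrix (U.orderEmbOfFin hU) (Uᶜ.orderEmbOfFin hUc) = 0 by
      ext; simp [Q, one_apply_ne, orderEmbOfFin_ne_orderEmbOfFin_compl],
    det_fromBlocks_zero₁₂, det_one, one_mul, Even.neg_one_pow ⟨_, rfl⟩, one_mul,
    ← det_transpose] at hblocks
  rw [← hblocks, show (Q.submatrix (Uᶜ.orderEmbOfFin hUc) (Uᶜ.orderEmbOfFin hUc))ᵀ =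
    of fun i j => R j (Uᶜ.orderEmbOfFin hUc i) by ext; simp [hQUc]]
  exact hRU

theorem exists_linearIndependent_ker_wedgeVec_eq_smul_complMinor (hn : r + k = n)
    {R : Matrix (Fin r) (Fin n) K} (hR : LinearIndependent K R) :
    ∃ (x : Fin k → Fin n → K) (c : K), c ≠ 0 ∧ LinearIndependent K x ∧
      Submodule.span K (Set.range x) = LinearMap.ker R.mulVecLin ∧
      wedgeVec x = c • complMinor hn R := by
  obtain ⟨U, hU, hUc, Q, hQ, hQUc⟩ := exists_isUnit_rows_compl_eq hn hR
  have hdetQ : IsUnit Q.det := (isUnit_iff_isUnit_det Q).mp hQ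
  have hQB : Q * Q⁻¹ = 1 := mul_nonsing_inv Q hdetQ
  set x : Fin k → Fin n → K := fun j i => Q⁻¹ i (U.orderEmbOfFin hU j)
  have hx : LinearIndependent K x :=
    (linearIndependent_cols_iff_isUnit.mpr (isUnit_nonsing_inv_iff.mpr hQ)).comp _
      (U.orderEmbOfFin hU).injective
  have hxker (j) : x j ∈ LinearMap.ker R.mulVecLin := by
    rw [LinearMap.mem_ker, mulVecLin_apply]
    ext p
    rw [Pi.zero_apply, ← one_apply_ne (orderEmbOfFin_ne_orderEmbOfFin_compl U hU hUc j p).symm,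
      ← hQB, mul_apply]
    simp only [hQUc]
    rfl
  have hker : Module.finrank K (LinearMap.ker R.mulVecLin) = k := by
    have := LinearMap.finrank_range_add_finrank_ker R.mulVecLin
    rw [← rank, hR.rank_matrix] at this
    simp at this
    omega
  refine ⟨x, Q.det⁻¹ * (-1) ^ ∑ i ∈ U, (i : ℕ), by simp [hdetQ.ne_zero], hx,
    Submodule.eq_of_le_of_finrank_eq (Submodule.span_le.mpr (Set.range_subset_iff.mpr hxker))
      (by rw [finrank_span_eq_card hx, Fintype.card_fin, hker]), funext fun S => ?_⟩
  have hJ := det_mul_det_submatrix_of_mul_eq_one hQB S.2 (card_compl_of_add_eq hn S.2) hU hUc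
  rw [show Q.submatrix (Uᶜ.orderEmbOfFin hUc) (S.1ᶜ.orderEmbOfFin (card_compl_of_add_eq hn S.2)) =
    R.submatrix id (S.1ᶜ.orderEmbOfFin (card_compl_of_add_eq hn S.2)) by ext; simp [hQUc]] at hJ
  change (Q⁻¹.submatrix (S.1.orderEmbOfFin S.2) (U.orderEmbOfFin hU)).det = _
  rw [Pi.smul_apply, smul_eq_mul, complMinor, ← mul_right_inj' hdetQ.ne_zero, hJ, pow_add]
  field_simp [hdetQ.ne_zero]

theorem exists_linearIndependent_ker_wedgeVec_eq_complMinor (hk : 0 < k) (hn : r + k = n)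
    {R : Matrix (Fin r) (Fin n) K} (hR : LinearIndependent K R) :
    ∃ x : Fin k → Fin n → K, LinearIndependent K x ∧
      Submodule.span K (Set.range x) = LinearMap.ker R.mulVecLin ∧
      wedgeVec x = complMinor hn R := by
  obtain ⟨x, c, hc, hx, hspan, hw⟩ :=
    exists_linearIndependent_ker_wedgeVec_eq_smul_complMinor hn hR
  obtain ⟨x', hx', hspan', hw'⟩ := exists_wedgeVec_eq_smul hk hx (inv_ne_zero hc)
  exact ⟨x', hx', hspan'.trans hspan, by rw [hw', hw, smul_smul, inv_mul_cancel₀ hc, one_smul]⟩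

end Plucker

section RankFactorization

variable [Field K] {r : ℕ}

lemma linearIndependent_of_rank_eq {m ι : Type*} [Fintype m] [Fintype ι] {M : Matrix m ι K}
    (h : M.rank = Fintype.card m) : LinearIndependent K M := by
  rw [rank_eq_finrank_span_row] at h
  exact linearIndependent_iff_card_eq_finrank_span.mpr h.symm

theorem exists_eq_mul_linearIndependent {m ι : Type*} [Fintype m] [Fintype ι] [DecidableEq ι]
    (A : Matrix m ι K) (hA : A.rank = r) :
    ∃ (C : Matrix m (Fin r) K) (R : Matrix (Fin r) ι K),
      A = C * R ∧ LinearIndependent K R ∧ LinearIndependent K Cᵀ := by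
  set b := Module.finBasisOfFinrankEq K (LinearMap.range A.mulVecLin) hA
  set C := LinearMap.toMatrix b (Pi.basisFun K m) (LinearMap.range A.mulVecLin).subtype
  set R := LinearMap.toMatrix (Pi.basisFun K ι) b A.mulVecLin.rangeRestrict
  have hCR : A = C * R := by
    rw [← LinearMap.toMatrix_comp, LinearMap.subtype_comp_codRestrict,
      ← Matrix.toLin'_apply', ← Matrix.toLin_eq_toLin', LinearMap.toMatrix_toLin]
  refine ⟨C, R, hCR, linearIndependent_of_rank_eq ?_, linearIndependent_of_rank_eq ?_⟩
  · refine le_antisymm (rank_le_card_height R) ?_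
    calc Fintype.card (Fin r) = A.rank := by rw [Fintype.card_fin, hA]
      _ ≤ R.rank := hCR ▸ rank_mul_le_right C R
  · refine le_antisymm (rank_le_card_height Cᵀ) ?_
    calc Fintype.card (Fin r) = A.rank := by rw [Fintype.card_fin, hA]
      _ ≤ Cᵀ.rank := rank_transpose C ▸ hCR ▸ rank_mul_le_left C R

lemma ker_mulVecLin_mul_of_linearIndependent {l m ι : Type*} [Fintype m] [Fintype ι]
    {C : Matrix l m K} (R : Matrix m ι K) (hC : LinearIndependent K Cᵀ) :
    LinearMap.ker (C * R).mulVecLin = LinearMap.ker R.mulVecLin := by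
  rw [mulVecLin_mul, LinearMap.ker_comp_of_ker_eq_bot]
  exact LinearMap.ker_eq_bot.mpr (mulVec_injective_iff.mpr hC)

end RankFactorization

/-- If `A` is an `n × n` matrix over `K` (`K = ℝ` or `ℂ`) with `rank A = n - k`,
`1 ≤ k ≤ n - 1`, then `adj_k A = u vᵀ` for nonzero vectors `u, v ∈ K^{C(n,k)}`, where
`u` is a basis of the one-dimensional space `⋀^k ker A` (i.e. `u` is the wedge, in
Plücker coordinates, of a basis of `ker A`) and `v` is a basis of `⋀^k ker Aᵀ`. -/
theorem adjCompound_rank_one_decomposition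
    {K : Type*} [RCLike K] {n k : ℕ} (hk1 : 1 ≤ k) (hk2 : k ≤ n - 1)
    (A : Matrix (Fin n) (Fin n) K) (hrank : A.rank = n - k) :
    ∃ u v : {s : Finset (Fin n) // s.card = k} → K,
      u ≠ 0 ∧ v ≠ 0 ∧
      adjCompound k A = Matrix.vecMulVec u v ∧
      (∃ x : Fin k → Fin n → K, LinearIndependent K x ∧
        Submodule.span K (Set.range x) = LinearMap.ker A.mulVecLin ∧ u = wedgeVec x) ∧
      (∃ y : Fin k → Fin n → K, LinearIndependent K y ∧
        Submodule.span K (Set.range y) = LinearMap.ker Aᵀ.mulVecLin ∧ v = wedgeVec y) := by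
  have hn : n - k + k = n := by omega
  obtain ⟨C, R, rfl, hR, hC⟩ := exists_eq_mul_linearIndependent A hrank
  obtain ⟨x, hx, hxspan, hxw⟩ := exists_linearIndependent_ker_wedgeVec_eq_complMinor hk1 hn hR
  obtain ⟨y, hy, hyspan, hyw⟩ := exists_linearIndependent_ker_wedgeVec_eq_complMinor hk1 hn hC
  refine ⟨wedgeVec x, wedgeVec y, wedgeVec_ne_zero hx, wedgeVec_ne_zero hy, ?_,
    ⟨x, hx, ?_, rfl⟩, ⟨y, hy, ?_, rfl⟩⟩
  · rw [hxw, hyw]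
    exact adjCompound_mul_eq_vecMulVec_complMinor hn C R
  · rw [hxspan, ker_mulVecLin_mul_of_linearIndependent R hC]
  · rw [hyspan, transpose_mul, ker_mulVecLin_mul_of_linearIndependent (C := Rᵀ) Cᵀ hR]
end

section
/- Let A be an n × n matrix over K (K = ℝ or ℂ), let λ ∈ K be an eigenvalue of A, and let k ∈ {1, …, n − 1}. Then the geometric multiplicity of λ equals k if and only if rank adj_k(A − λI) = 1. -/
open Matrix

variable {K : Type*}

/-!
Write `B = A - λ I` and `r = rank B`, so that the geometric multiplicity of `λ` is `n - r`.
Up to signs, transposition and the bijection `S ↦ Sᶜ` between `k`-subsets and `(n-k)`-subsets,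
`adj_k B` is the compound matrix `C_{n-k} B` of `(n-k)`-minors, so it suffices to see that for
`m ≥ 1` the rank of `C_m B` is `1` exactly when `m = r`:
* if `m > r`, every `m`-minor vanishes and `C_m B = 0`;
* if `m = r`, a rank factorization `B = X Y` through `K^r` turns `C_r B` into the outer product
  of the column `C_r X` and the row `C_r Y`, and some `r`-minor of `B` is nonzero;
* if `m < r`, `B` has a nonsingular `(m+1) × (m+1)` submatrix `B'`; then `C_m B'` is a submatrix
  of `C_m B` and, up to the same symmetries, it is the adjugate of `B'`, of rank `m + 1 ≥ 2`.
-/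

theorem Finset.orderEmbOfFin_map {α β : Type*} [LinearOrder α] [LinearOrder β] (s : Finset α)
    (f : α ↪o β) {k : ℕ} (h : (s.map f.toEmbedding).card = k) :
    (s.map f.toEmbedding).orderEmbOfFin h = (s.orderEmbOfFin (by simpa using h)).trans f :=
  DFunLike.coe_injective <| (Finset.orderEmbOfFin_unique h
    (fun _ => Finset.mem_map_of_mem _ (Finset.orderEmbOfFin_mem _ _ _))
    (f.strictMono.comp (s.orderEmbOfFin _).strictMono)).symm

-- `Set.powersetCard` equivalences, retyped to the subtypes `{s // s.card = k}` indexing `compound`.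
noncomputable def singletonEquiv (α : Type*) : α ≃ {s : Finset α // s.card = 1} :=
  Set.powersetCard.ofSingleton

@[simp]
theorem coe_singletonEquiv {α : Type*} (a : α) : (singletonEquiv α a : Finset α) = {a} := rfl

def complCardEquiv {n k : ℕ} (hk : k ≤ n) :
    {s : Finset (Fin n) // s.card = k} ≃ {s : Finset (Fin n) // s.card = n - k} :=
  Set.powersetCard.compl (by simp [hk])

section Field

variable [Field K]

theorem exists_finset_card_eq_linearIndepOn_of_le_finrank_span {ι V : Type*}
    [Fintype ι] [AddCommGroup V] [Module K V] (v : ι → V) {s : ℕ}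
    (hs : s ≤ Module.finrank K (Submodule.span K (Set.range v))) :
    ∃ T : Finset ι, T.card = s ∧ LinearIndepOn K v T := by
  classical
  obtain ⟨b, -, -, hspan, hb⟩ := exists_linearIndepOn_extension (linearIndepOn_empty K v)
    (Set.subset_univ ∅)
  have : Module.Finite K (Submodule.span K (v '' b)) :=
    Module.Finite.span_of_finite K ((Set.toFinite b).image v)
  have hcard : s ≤ b.toFinset.card := by
    have hle : Submodule.span K (Set.range v) ≤ Submodule.span K (v '' b) := by
      rwa [Submodule.span_le, ← Set.image_univ]
    calc s ≤ _ := hs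
      _ ≤ Module.finrank K (Submodule.span K (v '' b)) := Submodule.finrank_mono hle
      _ = b.toFinset.card := by
        rw [Set.image_eq_range, finrank_span_eq_card hb, Set.toFinset_card]
  obtain ⟨T, hTb, hT⟩ := Finset.exists_subset_card_eq hcard
  exact ⟨T, hT, hb.mono (by simpa using hTb)⟩

namespace Matrix

variable {m n : Type*} [Fintype n]

theorem le_rank_of_det_submatrix_ne_zero {s : ℕ} (A : Matrix m n K) (f : Fin s → m)
    (g : Fin s → n) (h : (A.submatrix f g).det ≠ 0) : s ≤ A.rank := by
  simpa [rank_of_det_ne_zero h] using rank_submatrix_le A f g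

theorem exists_linearIndependent_cols_of_le_rank [LinearOrder n] (A : Matrix m n K) {s : ℕ}
    (hs : s ≤ A.rank) :
    ∃ (T : Finset n) (hT : T.card = s),
      LinearIndependent K (A.submatrix id (T.orderEmbOfFin hT)).col := by
  rw [rank_eq_finrank_span_cols] at hs
  obtain ⟨T, hT, hind⟩ := exists_finset_card_eq_linearIndepOn_of_le_finrank_span A.col hs
  exact ⟨T, hT, hind.comp _ (T.orderIsoOfFin hT).injective⟩

theorem exists_det_submatrix_ne_zero_of_le_rank [Fintype m] [LinearOrder m] [LinearOrder n]
    (A : Matrix m n K) {s : ℕ} (hs : s ≤ A.rank) :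
    ∃ (S : Finset m) (T : Finset n) (hS : S.card = s) (hT : T.card = s),
      (A.submatrix (S.orderEmbOfFin hS) (T.orderEmbOfFin hT)).det ≠ 0 := by
  obtain ⟨T, hT, hcols⟩ := A.exists_linearIndependent_cols_of_le_rank hs
  obtain ⟨S, hS, hrows⟩ := exists_linearIndependent_cols_of_le_rank
    (A.submatrix id (T.orderEmbOfFin hT))ᵀ
    (by simpa using (LinearIndependent.rank_matrix (M := _ᵀ) hcols).ge)
  refine ⟨S, T, hS, hT, ?_⟩
  exact ((isUnit_iff_isUnit_det _).1 (linearIndependent_rows_iff_isUnit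
    (A := A.submatrix (S.orderEmbOfFin hS) (T.orderEmbOfFin hT)).1 hrows)).ne_zero

theorem exists_eq_mul_of_rank_eq (A : Matrix m n K) {r : ℕ} (h : A.rank = r) :
    ∃ (X : Matrix m (Fin r) K) (Y : Matrix (Fin r) n K), A = X * Y := by
  rw [rank_eq_finrank_span_cols] at h
  have := Module.Finite.span_of_finite K (Set.finite_range A.col)
  let b := Module.finBasisOfFinrankEq K _ h
  refine ⟨of fun i k => (b k : m → K) i,
    of fun k j => b.repr ⟨A.col j, Submodule.subset_span ⟨j, rfl⟩⟩ k, ?_⟩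
  ext i j
  have hcol := congrArg (fun v : Submodule.span K (Set.range A.col) => (v : m → K) i)
    (b.sum_repr ⟨A.col j, Submodule.subset_span ⟨j, rfl⟩⟩)
  simp only [Submodule.coe_sum, Submodule.coe_smul, Finset.sum_apply, Pi.smul_apply,
    smul_eq_mul] at hcol
  simpa [mul_apply, mul_comm] using hcol.symm

end Matrix

end Field

section CommRing

variable [CommRing K]

theorem compound_submatrix {m n a b k : ℕ} (A : Matrix (Fin m) (Fin n) K) (f : Fin a ↪o Fin m)
    (g : Fin b ↪o Fin n) :
    compound k (A.submatrix f g) = (compound k A).submatrix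
      (fun S => ⟨S.1.map f.toEmbedding, by simp [S.2]⟩)
      (fun T => ⟨T.1.map g.toEmbedding, by simp [T.2]⟩) := by
  ext S T
  simp only [compound, submatrix_apply, Finset.orderEmbOfFin_map, submatrix_submatrix]
  rfl

theorem compound_mul_eq_vecMulVec {m n r : ℕ} (X : Matrix (Fin m) (Fin r) K)
    (Y : Matrix (Fin r) (Fin n) K) :
    compound r (X * Y) = vecMulVec (fun S => (X.submatrix (S.1.orderEmbOfFin S.2) id).det)
      (fun T => (Y.submatrix id (T.1.orderEmbOfFin T.2)).det) := by
  ext S T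
  rw [compound, submatrix_mul _ _ _ id _ Function.bijective_id, det_mul, vecMulVec_apply]

def subsetSign {n k : ℕ} (S : {s : Finset (Fin n) // s.card = k}) : K :=
  (-1) ^ ∑ i ∈ S.1, (i : ℕ)

theorem adjCompound_eq_diagonal_mul_compound_transpose_mul_diagonal {n k : ℕ} (hk : k ≤ n)
    (B : Matrix (Fin n) (Fin n) K) :
    adjCompound k B = diagonal subsetSign *
      (compound (n - k) B)ᵀ.submatrix (complCardEquiv hk) (complCardEquiv hk) *
        diagonal subsetSign := by
  ext S T
  simp only [adjCompound, subsetSign, diagonal_mul, mul_diagonal, pow_add]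
  ring_nf
  rfl

theorem adjCompound_one_submatrix_singletonEquiv {N : ℕ}
    (B : Matrix (Fin (N + 1)) (Fin (N + 1)) K) :
    (adjCompound 1 B).submatrix (singletonEquiv _) (singletonEquiv _) = adjugate B := by
  ext a b
  simp only [submatrix_apply, adjCompound, coe_singletonEquiv, Finset.sum_singleton,
    Finset.orderEmbOfFin_compl_singleton_eq_succAboveOrderEmb,
    adjugate_fin_succ_eq_det_submatrix, add_comm]
  rfl

end CommRing

section Field

variable [Field K]

theorem rank_adjCompound {n k : ℕ} (hk : k ≤ n) (B : Matrix (Fin n) (Fin n) K) :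
    (adjCompound k B).rank = (compound (n - k) B).rank := by
  have hσ : ∀ {k}, IsUnit (diagonal (subsetSign (K := K) (n := n) (k := k))).det := by
    simp [subsetSign, det_diagonal, Finset.prod_ne_zero_iff]
  rw [adjCompound_eq_diagonal_mul_compound_transpose_mul_diagonal hk,
    rank_mul_eq_left_of_isUnit_det _ _ hσ, rank_mul_eq_right_of_isUnit_det _ _ hσ,
    rank_submatrix, rank_transpose]

theorem compound_eq_zero_of_rank_lt {m n k : ℕ} (A : Matrix (Fin m) (Fin n) K)
    (h : A.rank < k) : compound k A = 0 := by
  ext S T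
  by_contra hST
  exact h.not_ge (A.le_rank_of_det_submatrix_ne_zero _ _ hST)

theorem rank_compound_rank {m n : ℕ} (A : Matrix (Fin m) (Fin n) K) :
    (compound A.rank A).rank = 1 := by
  generalize hr : A.rank = r
  obtain ⟨S, T, hS, hT, hST⟩ := A.exists_det_submatrix_ne_zero_of_le_rank hr.ge
  refine le_antisymm ?_ ?_
  · obtain ⟨X, Y, rfl⟩ := A.exists_eq_mul_of_rank_eq hr
    rw [compound_mul_eq_vecMulVec]
    exact rank_vecMulVec_le _ _
  · exact (compound r A).le_rank_of_det_submatrix_ne_zero (fun _ : Fin 1 => ⟨S, hS⟩)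
      (fun _ => ⟨T, hT⟩) (by rwa [det_fin_one])

theorem rank_compound_of_det_ne_zero {N : ℕ} (B : Matrix (Fin (N + 1)) (Fin (N + 1)) K)
    (h : B.det ≠ 0) : (compound N B).rank = N + 1 := by
  have hadj : (adjugate B).det ≠ 0 := by simp [det_adjugate, h]
  calc (compound N B).rank = (adjCompound 1 B).rank :=
        (rank_adjCompound (k := 1) (by omega) B).symm
    _ = (adjugate B).rank := by
      rw [← adjCompound_one_submatrix_singletonEquiv, rank_submatrix]
    _ = N + 1 := by rw [rank_of_det_ne_zero hadj, Fintype.card_fin]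

theorem le_rank_compound_of_lt_rank {m n k : ℕ} (A : Matrix (Fin m) (Fin n) K)
    (h : k < A.rank) : k + 1 ≤ (compound k A).rank := by
  obtain ⟨S, T, hS, hT, hST⟩ := A.exists_det_submatrix_ne_zero_of_le_rank h
  calc k + 1 = (compound k (A.submatrix (S.orderEmbOfFin hS) (T.orderEmbOfFin hT))).rank :=
        (rank_compound_of_det_ne_zero _ hST).symm
    _ ≤ (compound k A).rank := by
      rw [compound_submatrix]
      exact rank_submatrix_le _ _ _

end Field

theorem geometric_multiplicity_eq_iff_rank_adjCompound_eq_one_general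
    {K : Type*} [RCLike K] {n : ℕ} (A : Matrix (Fin n) (Fin n) K) (lam : K)
    (k : ℕ) (hk2 : k ≤ n - 1) :
    Module.finrank K (LinearMap.ker (A - lam • 1).mulVecLin) = k ↔
      (adjCompound k (A - lam • 1)).rank = 1 := by
  set B := A - lam • 1
  have hrank_nullity : B.rank + Module.finrank K (LinearMap.ker B.mulVecLin) = n := by
    simpa [rank] using LinearMap.finrank_range_add_finrank_ker B.mulVecLin
  have hrank_le : B.rank ≤ n := B.rank_le_width
  rw [rank_adjCompound (by omega)]
  constructor
  · intro hker
    rw [show n - k = B.rank by omega]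
    exact rank_compound_rank B
  · intro h
    rcases lt_trichotomy B.rank (n - k) with hlt | heq | hgt
    · simp [compound_eq_zero_of_rank_lt B hlt] at h
    · omega
    · have := le_rank_compound_of_lt_rank B hgt
      omega

/-- Let `A` be an `n × n` matrix over `K` (`K = ℝ` or `ℂ`), `λ ∈ K` an eigenvalue of `A`,
and `k ∈ {1, …, n-1}`.  Then the geometric multiplicity of `λ` equals `k` iff
`rank (adj_k (A - λI)) = 1`. -/
theorem geometric_multiplicity_eq_iff_rank_adjCompound_eq_one
    {K : Type*} [RCLike K] {n : ℕ} (A : Matrix (Fin n) (Fin n) K) (lam : K)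
    (hlam : ∃ v : Fin n → K, v ≠ 0 ∧ A *ᵥ v = lam • v)
    (k : ℕ) (hk1 : 1 ≤ k) (hk2 : k ≤ n - 1) :
    Module.finrank K (LinearMap.ker (A - lam • 1).mulVecLin) = k ↔
      (adjCompound k (A - lam • 1)).rank = 1 :=
  geometric_multiplicity_eq_iff_rank_adjCompound_eq_one_general A lam k hk2
end

section
/- Let A be an n × n matrix over ℂ and let λ ∈ ℂ be an eigenvalue of A. Then λ is an algebraically simple eigenvalue of A (i.e., λ is a root of multiplicity 1 of the characteristic polynomial P(t) = det(A − tI)) if and only if tr(adj(A − λI)) ≠ 0, where adj denotes the classical adjugate. -/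
open Matrix

variable {K : Type*}

open Polynomial in
lemma derivative_finset_prod' {R ι : Type*} [CommRing R] [DecidableEq ι]
    (s : Finset ι) (f : ι → R[X]) :
    derivative (∏ i ∈ s, f i) = ∑ i ∈ s, (∏ j ∈ s.erase i, f j) * derivative (f i) := by
  induction s using Finset.induction with
  | empty => simp
  | @insert a s ha ih =>
    rw [Finset.prod_insert ha, derivative_mul, ih, Finset.sum_insert ha,
      Finset.erase_insert ha, Finset.mul_sum]
    congr 1
    · rw [mul_comm]
    · refine Finset.sum_congr rfl fun i hi => ?_
      have hia : a ≠ i := fun h => ha (h ▸ hi)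
      rw [Finset.erase_insert_of_ne hia,
        Finset.prod_insert (fun h => ha (Finset.mem_of_mem_erase h))]
      ring

open Polynomial in
lemma derivative_det_eq {R : Type*} [CommRing R] {n : Type*} [Fintype n] [DecidableEq n]
    (M : Matrix n n R[X]) :
    derivative M.det
      = ∑ j, (M.updateCol j fun i => derivative (M i j)).det := by
  simp only [Matrix.det_apply']
  rw [map_sum, Finset.sum_comm]
  refine Finset.sum_congr rfl fun σ _ => ?_
  rw [derivative_mul]
  simp only [derivative_intCast, zero_mul, zero_add]
  rw [derivative_finset_prod', Finset.mul_sum]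
  refine Finset.sum_congr rfl fun j _ => ?_
  congr 1
  rw [← Finset.mul_prod_erase _ _ (Finset.mem_univ j), Matrix.updateCol_apply, if_pos rfl,
    mul_comm]
  congr 1
  refine Finset.prod_congr rfl fun i hi => ?_
  rw [Matrix.updateCol_apply, if_neg (Finset.mem_erase.mp hi).1]

open Polynomial in
lemma eval_derivative_detPoly {n : ℕ} (A : Matrix (Fin n) (Fin n) ℂ) (t : ℂ) :
    (derivative (detPoly A)).eval t = -Matrix.trace (Matrix.adjugate (A - t • 1)) := by
  set M : Matrix (Fin n) (Fin n) ℂ[X] :=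
    (Matrix.of fun i j => C (A i j)) - (X : ℂ[X]) • 1 with hMdef
  have hder : derivative (detPoly A) = -Matrix.trace (Matrix.adjugate M) := by
    rw [detPoly, ← hMdef, derivative_det_eq]
    have hcol : ∀ j : Fin n, (fun i => derivative (M i j))
        = (-1 : ℂ[X]) • (Pi.single j 1 : Fin n → ℂ[X]) := by
      intro j
      funext i
      simp only [hMdef, Matrix.sub_apply, Matrix.of_apply, Matrix.smul_apply,
        Matrix.one_apply, Pi.smul_apply, Pi.single_apply, smul_eq_mul, mul_ite, mul_one, mul_zero]
      by_cases h : i = j <;> simp [h]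
    have hdiag : ∀ j : Fin n,
        (M.updateCol j (Pi.single j 1)).det = Matrix.adjugate M j j := by
      intro j
      have h1 : Matrix.adjugate Mᵀ j j = (Mᵀ.updateRow j (Pi.single j 1)).det :=
        Matrix.adjugate_apply _ _ _
      rw [Matrix.updateRow_transpose, Matrix.det_transpose] at h1
      rw [← h1, ← Matrix.adjugate_transpose, Matrix.transpose_apply]
    calc ∑ j, (M.updateCol j fun i => derivative (M i j)).det
        = ∑ j, (-1 : ℂ[X]) * (M.updateCol j (Pi.single j 1)).det := by
          refine Finset.sum_congr rfl fun j _ => ?_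
          rw [hcol j, Matrix.det_updateCol_smul]
      _ = -Matrix.trace (Matrix.adjugate M) := by
          simp only [neg_one_mul, ← Finset.sum_neg_distrib]
          rw [Matrix.trace, ← Finset.sum_neg_distrib]
          exact Finset.sum_congr rfl fun j _ => by rw [hdiag j, Matrix.diag_apply]
  rw [hder]
  have hmap : M.map (eval t) = A - t • 1 := by
    ext i j
    simp [hMdef, Matrix.one_apply, Pi.single_apply, apply_ite (eval t)]
  have hadj := (evalRingHom t).map_adjugate M
  simp only [RingHom.mapMatrix_apply, coe_evalRingHom] at hadj
  have htr : eval t (Matrix.trace (Matrix.adjugate M))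
      = Matrix.trace (Matrix.adjugate (A - t • 1)) := by
    rw [← hmap, ← hadj, Matrix.trace, Matrix.trace, eval_finset_sum]
    refine Finset.sum_congr rfl fun i _ => ?_
    simp [Matrix.map_apply]
  rw [eval_neg, htr]

/-- Let `A` be an `n × n` complex matrix and `λ` an eigenvalue of `A`.  Then `λ` is
algebraically simple (a root of multiplicity `1` of `P(t) = det (A - tI)`) iff
`tr (adj (A - λI)) ≠ 0`. -/
theorem algebraically_simple_iff_trace_adjugate_ne_zero
    {n : ℕ} (A : Matrix (Fin n) (Fin n) ℂ) (lam : ℂ)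
    (hlam : ∃ v : Fin n → ℂ, v ≠ 0 ∧ A *ᵥ v = lam • v) :
    (detPoly A).rootMultiplicity lam = 1 ↔
      Matrix.trace (Matrix.adjugate (A - lam • 1)) ≠ 0 := by
  classical
  set P : Polynomial ℂ := detPoly A with hP
  -- P is (-1)^n times the characteristic polynomial, hence nonzero
  have hPchar : P = (-1 : Polynomial ℂ) ^ n * Matrix.charpoly A := by
    have hneg : (Matrix.of fun i j => Polynomial.C (A i j)) - (Polynomial.X : Polynomial ℂ) • 1
        = -(Matrix.charmatrix A) := by
      ext i j
      by_cases h : i = j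
      · subst h
        simp [Matrix.charmatrix_apply_eq, Matrix.one_apply]
      · simp [Matrix.charmatrix_apply_ne _ _ _ h, Matrix.one_apply, h]
    rw [hP, detPoly, hneg, Matrix.det_neg, Matrix.charpoly]
    simp
  have hP0 : P ≠ 0 := by
    rw [hPchar]
    exact mul_ne_zero (pow_ne_zero _ (by norm_num)) (Matrix.charpoly_monic A).ne_zero
  -- lam is a root of P
  have hroot : P.IsRoot lam := by
    obtain ⟨v, hv, hAv⟩ := hlam
    have hdet : (A - lam • 1).det = 0 := by
      rw [← Matrix.exists_mulVec_eq_zero_iff]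
      refine ⟨v, hv, ?_⟩
      rw [Matrix.sub_mulVec, hAv, Matrix.smul_mulVec, Matrix.one_mulVec, sub_self]
    have heval : P.eval lam = (A - lam • 1).det := by
      rw [hP, detPoly, ← Polynomial.coe_evalRingHom, RingHom.map_det]
      congr 1
      ext i j
      simp [Matrix.one_apply, apply_ite (Polynomial.eval lam)]
    rw [Polynomial.IsRoot, heval, hdet]
  have hpos : 0 < P.rootMultiplicity lam := (Polynomial.rootMultiplicity_pos hP0).mpr hroot
  have hder : (Polynomial.derivative P).eval lam
      = -Matrix.trace (Matrix.adjugate (A - lam • 1)) := eval_derivative_detPoly A lam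
  constructor
  · intro h1 htr
    have : 1 < P.rootMultiplicity lam := by
      rw [Polynomial.one_lt_rootMultiplicity_iff_isRoot hP0]
      exact ⟨hroot, by rw [Polynomial.IsRoot, hder, htr, neg_zero]⟩
    omega
  · intro htr
    by_contra h1
    have h2 : 1 < P.rootMultiplicity lam := by omega
    rw [Polynomial.one_lt_rootMultiplicity_iff_isRoot hP0] at h2
    have := h2.2
    rw [Polynomial.IsRoot, hder, neg_eq_zero] at this
    exact htr this
end
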